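/- arXiv:2505.02330 — 9 statements merged into one kernel-verified Lean document; each statement's English description precedes it below -/
import Mathlib

section
/- Let b>0, M≥1 be an integer, N=2M, λ=2b/N, x_j=-b+jλ for 0≤j<N, let f:ℝ→ℝ be an even 2b-periodic function and y_j=f(x_j). Define a_0=(1/M)·∑_{j=0}^{M-1} y_{2j}, a_j=(2/N)·∑_{k=0}^{N-1}(-1)^j y_k cos(2πjk/N) for 1≤j<M, f_M(x)=∑_{j=0}^{M-1} a_j cos(jπx/b), and ε_M=(1/M)·∑_{j=0}^{N-1}(-1)^j y_j. Then for every 0≤k<M one has f_M(x_{2k})=y_{2k} and f_M(x_{2k+1})=y_{2k+1}+ε_M; i.e. f_M fits all even-indexed nodes exactly and is shifted in parallel by ε_M at all odd-indexed nodes. -/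
open Finset Real Complex

set_option maxHeartbeats 1000000 in
lemma sum_cos_eq (M : ℕ) (hM : 0 < M) (n : ℤ) :
    ∑ j ∈ Finset.range M, Real.cos (Real.pi * n * j / M) =
      if (2 * (M:ℤ)) ∣ n then (M:ℝ) else if (2:ℤ) ∣ n then 0 else 1 := by
  have hM0 : (M:ℝ) ≠ 0 := Nat.cast_ne_zero.mpr hM.ne'
  have hMC : (M:ℂ) ≠ 0 := Nat.cast_ne_zero.mpr hM.ne'
  set θ : ℝ := Real.pi * n / M with hθ
  set z : ℂ := Complex.exp (θ * Complex.I) with hz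
  have hzj : ∀ j : ℕ, z ^ j = Complex.exp ((Real.pi * n * j / M : ℝ) * Complex.I) := by
    intro j
    rw [hz, ← Complex.exp_nat_mul]
    congr 1
    push_cast [hθ]
    field_simp
  have hre : ∀ j : ℕ, Real.cos (Real.pi * n * j / M) = (z ^ j).re := by
    intro j; rw [hzj j, Complex.exp_ofReal_mul_I_re]
  have hsum : ∑ j ∈ Finset.range M, Real.cos (Real.pi * n * j / M)
      = (∑ j ∈ Finset.range M, z ^ j).re := by
    rw [Complex.re_sum]; exact Finset.sum_congr rfl fun j _ => hre j
  by_cases hdvd : (2 * (M:ℤ)) ∣ n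
  · rw [if_pos hdvd]
    obtain ⟨t, ht⟩ := hdvd
    have hz1 : z = 1 := by
      rw [hz]
      have : (θ:ℂ) * Complex.I = (t:ℤ) * (2 * Real.pi * Complex.I) := by
        rw [hθ, ht]
        push_cast
        field_simp
      rw [this, Complex.exp_int_mul_two_pi_mul_I]
    simp [hsum, hz1]
  · rw [if_neg hdvd]
    have hz1 : z ≠ 1 := by
      intro h
      rw [hz, Complex.exp_eq_one_iff] at h
      obtain ⟨t, ht⟩ := h
      apply hdvd
      refine ⟨t, ?_⟩
      have ht' : (θ:ℂ) * Complex.I = ((t:ℂ) * (2 * Real.pi)) * Complex.I := by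
        rw [ht]; ring
      have hI := mul_right_cancel₀ Complex.I_ne_zero ht'
      have hre2 : θ = (t:ℝ) * (2 * Real.pi) := by
        have := congrArg Complex.re hI
        simpa using this
      rw [hθ] at hre2
      field_simp at hre2
      have h3 : Real.pi * (n:ℝ) = Real.pi * ((2 * (M:ℤ) * t : ℤ) : ℝ) := by
        push_cast; rw [hre2]; ring
      have := mul_left_cancel₀ Real.pi_ne_zero h3
      exact_mod_cast this
    have hgeom : ∑ j ∈ Finset.range M, z ^ j = (z ^ M - 1) / (z - 1) :=
      geom_sum_eq hz1 M
    have hzM : z ^ M = (-1 : ℂ) ^ n := by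
      rw [hz, ← Complex.exp_nat_mul]
      have h4 : (M:ℂ) * ((θ:ℝ) * Complex.I) = (n:ℤ) * (Real.pi * Complex.I) := by
        rw [hθ]; push_cast; field_simp
      rw [h4, Complex.exp_int_mul, Complex.exp_pi_mul_I]
    by_cases hev : (2:ℤ) ∣ n
    · rw [if_pos hev]
      have : z ^ M = 1 := by
        rw [hzM]
        obtain ⟨s, hs⟩ := hev
        rw [hs, zpow_mul]
        norm_num
      rw [hsum, hgeom, this]
      simp
    · rw [if_neg hev]
      have hodd : Odd n := Int.odd_iff.mpr (by omega)
      have hzM' : z ^ M = -1 := by rw [hzM, hodd.neg_one_zpow]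
      rw [hsum, hgeom, hzM']
      have hzne : z - 1 ≠ 0 := sub_ne_zero.mpr hz1
      have key : (-1 - 1 : ℂ) / (z - 1) = 1 - (z + 1) / (z - 1) := by
        field_simp
        ring
      rw [key]
      have hnsq : Complex.normSq z = 1 := by
        rw [hz, Complex.normSq_eq_norm_sq, Complex.norm_exp_ofReal_mul_I]
        norm_num
      have h1 : z.re * z.re + z.im * z.im = 1 := by
        rwa [Complex.normSq_apply] at hnsq
      have hre0 : ((z + 1) / (z - 1)).re = 0 := by
        rw [Complex.div_re, ← add_div, div_eq_zero_iff]
        left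
        simp only [Complex.add_re, Complex.sub_re, Complex.add_im, Complex.sub_im,
          Complex.one_re, Complex.one_im]
        ring_nf
        linarith [h1]
      simp [Complex.sub_re, hre0]

lemma sum_cos_tail (M : ℕ) (hM : 0 < M) (n : ℤ) :
    ∑ j ∈ Finset.range (M-1), Real.cos (Real.pi * n * ((j:ℝ)+1) / M) =
      (if (2 * (M:ℤ)) ∣ n then (M:ℝ) else if (2:ℤ) ∣ n then 0 else 1) - 1 := by
  have h := sum_cos_eq M hM n
  obtain ⟨m, rfl⟩ : ∃ m, M = m + 1 := ⟨M-1, by omega⟩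
  rw [Finset.sum_range_succ'] at h
  simp only [Nat.cast_zero, mul_zero, zero_div, Real.cos_zero] at h
  have e : ∀ j : ℕ, Real.cos (Real.pi * n * (((j+1:ℕ)):ℝ) / (m+1:ℕ))
      = Real.cos (Real.pi * n * ((j:ℝ)+1) / ((m+1:ℕ):ℝ)) := by
    intro j; push_cast; ring_nf
  rw [Finset.sum_congr rfl (fun j _ => e j)] at h
  simp only [Nat.add_sub_cancel]
  linarith [h]

lemma sum_range_two_mul (g : ℕ → ℝ) (M : ℕ) :
    ∑ k ∈ Finset.range (2*M), g k
      = ∑ l ∈ Finset.range M, g (2*l) + ∑ l ∈ Finset.range M, g (2*l+1) := by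
  induction M with
  | zero => simp
  | succ m ih =>
      rw [show 2*(m+1) = (2*m+1)+1 by ring, Finset.sum_range_succ, Finset.sum_range_succ,
        Finset.sum_range_succ, Finset.sum_range_succ, ih]
      ring

lemma dvd_iff_eq (M k m : ℕ) (hM : 0 < M) (hk : k < 2*M) (hm : m < 2*M) :
    ((2*(M:ℤ)) ∣ ((k:ℤ) - m)) ↔ k = m := by
  constructor
  · intro h
    have := Int.eq_zero_of_abs_lt_dvd h (by
      rw [abs_lt]; constructor <;> push_cast <;> omega)
    omega
  · rintro rfl; simp

lemma dvd_iff_eq' (M k m : ℕ) (hM : 0 < M) (hk : k < 2*M) (hm : m < 2*M) :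
    ((2*(M:ℤ)) ∣ ((k:ℤ) + m)) ↔ k = (2*M - m) % (2*M) := by
  have hmod : (2*M - m) % (2*M) = if m = 0 then 0 else 2*M - m := by
    split_ifs with h
    · simp [h]
    · exact Nat.mod_eq_of_lt (by omega)
  rw [hmod]
  constructor
  · intro h
    have h2 : ((2*(M:ℤ)) ∣ ((k:ℤ) + m - 2*M)) := by
      exact (Int.dvd_sub h (dvd_refl _))
    by_cases hc : k + m < 2*M
    · have := Int.eq_zero_of_abs_lt_dvd h (by rw [abs_lt]; constructor <;> push_cast <;> omega)
      have : k = 0 ∧ m = 0 := by omega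
      simp [this.1, this.2]
    · have := Int.eq_zero_of_abs_lt_dvd h2 (by rw [abs_lt]; constructor <;> push_cast <;> omega)
      have hkm : k + m = 2*M := by omega
      split_ifs with h0
      · omega
      · omega
  · intro h
    split_ifs at h with h0
    · subst h0; subst h; simp
    · refine ⟨1, ?_⟩; push_cast; omega

lemma dvd_two_iff (k m : ℕ) : ((2:ℤ) ∣ ((k:ℤ) - m)) ↔ k % 2 = m % 2 := by omega

lemma dvd_two_iff' (k m : ℕ) : ((2:ℤ) ∣ ((k:ℤ) + m)) ↔ k % 2 = m % 2 := by omega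

lemma indicator_eval (M k m : ℕ) (hM : 0 < M) (hk : k < 2*M) (hm : m < 2*M) :
    ((if (2*(M:ℤ)) ∣ ((k:ℤ)-m) then (M:ℝ) else if (2:ℤ) ∣ ((k:ℤ)-m) then 0 else 1) - 1)
    + ((if (2*(M:ℤ)) ∣ ((k:ℤ)+m) then (M:ℝ) else if (2:ℤ) ∣ ((k:ℤ)+m) then 0 else 1) - 1)
    = (if k % 2 = m % 2 then (-2:ℝ) else 0) + (if k = m then (M:ℝ) else 0)
      + (if k = (2*M - m) % (2*M) then (M:ℝ) else 0) := by
  have hd1 := dvd_iff_eq M k m hM hk hm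
  have hd2 := dvd_iff_eq' M k m hM hk hm
  have hd3 := dvd_two_iff k m
  have hd4 := dvd_two_iff' k m
  have hc2 : k = (2*M-m)%(2*M) → k % 2 = m % 2 :=
    fun h => hd4.mp (dvd_trans ⟨(M:ℤ), by ring⟩ (hd2.mpr h))
  simp only [hd1, hd2, hd3, hd4]
  split_ifs <;> try ring
  all_goals exfalso
  all_goals first
    | exact ‹¬ k % 2 = m % 2› (by rw [‹k = m›])
    | exact ‹¬ k % 2 = m % 2› (hc2 ‹_›)

/-- the adjusted trigonometric interpolant of an even `2b`-periodic
function fits all even-indexed nodes exactly and is shifted in parallel by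
`ε_M` at all odd-indexed nodes. -/
theorem adjusted_interpolant_even_fit
    (b : ℝ) (hb : 0 < b) (M : ℕ) (hM : 1 ≤ M)
    (f : ℝ → ℝ)
    (hper : ∀ t, f (t + 2 * b) = f t)
    (heven : ∀ t, f (-t) = f t)
    (x : ℕ → ℝ) (hx : ∀ j, x j = -b + (j : ℝ) * (2 * b / (2 * (M : ℝ))))
    (y : ℕ → ℝ) (hy : ∀ j, y j = f (x j))
    (a : ℕ → ℝ)
    (ha0 : a 0 = (1 / (M : ℝ)) * ∑ j ∈ Finset.range M, y (2 * j))
    (ha : ∀ j, 1 ≤ j → j < M →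
      a j = (2 / (2 * (M : ℝ))) * ∑ k ∈ Finset.range (2 * M),
        (-1 : ℝ) ^ j * y k * Real.cos (2 * Real.pi * (j : ℝ) * (k : ℝ) / (2 * (M : ℝ))))
    (fM : ℝ → ℝ)
    (hfM : ∀ t, fM t = ∑ j ∈ Finset.range M, a j * Real.cos ((j : ℝ) * Real.pi * t / b))
    (eps : ℝ)
    (heps : eps = (1 / (M : ℝ)) * ∑ j ∈ Finset.range (2 * M), (-1 : ℝ) ^ j * y j) :
    ∀ k, k < M →
      fM (x (2 * k)) = y (2 * k) ∧ fM (x (2 * k + 1)) = y (2 * k + 1) + eps := by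
  have hb0 : b ≠ 0 := ne_of_gt hb
  have key : ∀ m, m < 2*M → fM (x m) = y m + (if m % 2 = 1 then eps else 0) := by
    intro m hm
    have hM0 : ((M:ℝ)) ≠ 0 := Nat.cast_ne_zero.mpr (by omega)
    -- symmetry of y
    have hysym : y ((2*M - m) % (2*M)) = y m := by
      by_cases h0 : m = 0
      · subst h0; simp
      · rw [Nat.mod_eq_of_lt (by omega)]
        rw [hy, hy]
        have hxm : x (2*M - m) = -(x m) := by
          rw [hx, hx]
          have hc : ((2*M - m : ℕ):ℝ) = 2*(M:ℝ) - m := by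
            push_cast [Nat.cast_sub (by omega : m ≤ 2*M)]; ring
          rw [hc]
          field_simp
          ring
        rw [hxm, heven]
    obtain ⟨Mm, rfl⟩ : ∃ Mm, M = Mm + 1 := ⟨M-1, by omega⟩
    have hM0' : (((Mm+1 : ℕ)):ℝ) ≠ 0 := hM0
    have hcosnode : ∀ j : ℕ, Real.cos ((j:ℝ) * Real.pi * x m / b)
        = (-1:ℝ)^j * Real.cos (Real.pi * (j:ℝ) * m / ((Mm+1:ℕ):ℝ)) := by
      intro j
      have harg : (j:ℝ) * Real.pi * x m / b
          = -((j:ℝ) * Real.pi - Real.pi * (j:ℝ) * m / ((Mm+1:ℕ):ℝ)) := by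
        rw [hx]; field_simp; ring
      rw [harg, Real.cos_neg, Real.cos_nat_mul_pi_sub]
    rw [hfM]
    rw [Finset.sum_congr rfl (fun j _ => by rw [hcosnode j] :
      ∀ j ∈ Finset.range (Mm+1), a j * Real.cos ((j:ℝ) * Real.pi * x m / b)
        = a j * ((-1:ℝ)^j * Real.cos (Real.pi * (j:ℝ) * m / ((Mm+1:ℕ):ℝ))))]
    rw [Finset.sum_range_succ']
    norm_num
    have hstep : ∀ j ∈ Finset.range Mm,
        a (j+1) * ((-1:ℝ)^(j+1) * Real.cos (Real.pi * ((j:ℝ)+1) * m / ((Mm:ℝ)+1)))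
        = ∑ kk ∈ Finset.range (2*(Mm+1)), (1/(2*((Mm+1:ℕ):ℝ))) * y kk *
            (Real.cos (Real.pi * (((kk:ℤ) - (m:ℤ)):ℝ) * ((j:ℝ)+1) / ((Mm+1:ℕ):ℝ))
             + Real.cos (Real.pi * (((kk:ℤ) + (m:ℤ)):ℝ) * ((j:ℝ)+1) / ((Mm+1:ℕ):ℝ))) := by
      intro j hj
      have hj' := Finset.mem_range.mp hj
      rw [ha (j+1) (by omega) (by omega)]
      rw [mul_assoc, Finset.sum_mul, Finset.mul_sum]
      refine Finset.sum_congr rfl fun kk hkk => ?_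
      have hsq : ((-1:ℝ)^(j+1)) * ((-1:ℝ)^(j+1)) = 1 := by
        rw [← mul_pow]; norm_num
      have e1 : 2 * Real.pi * ((j+1:ℕ):ℝ) * (kk:ℝ) / (2*((Mm+1:ℕ):ℝ))
          = Real.pi * ((j:ℝ)+1) * (kk:ℝ) / ((Mm+1:ℕ):ℝ) := by
        push_cast; rw [div_eq_div_iff (by positivity) (by positivity)]; ring
      have e2 : Real.pi * ((j+1:ℕ):ℝ) * (m:ℝ) / ((Mm+1:ℕ):ℝ)
          = Real.pi * ((j:ℝ)+1) * (m:ℝ) / ((Mm+1:ℕ):ℝ) := by push_cast; ring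
      have e3 : Real.pi * (((kk:ℤ) - (m:ℤ)):ℝ) * ((j:ℝ)+1) / ((Mm+1:ℕ):ℝ)
          = Real.pi * ((j:ℝ)+1) * (kk:ℝ) / ((Mm+1:ℕ):ℝ)
            - Real.pi * ((j:ℝ)+1) * (m:ℝ) / ((Mm+1:ℕ):ℝ) := by push_cast; ring
      have e4 : Real.pi * (((kk:ℤ) + (m:ℤ)):ℝ) * ((j:ℝ)+1) / ((Mm+1:ℕ):ℝ)
          = Real.pi * ((j:ℝ)+1) * (kk:ℝ) / ((Mm+1:ℕ):ℝ)
            + Real.pi * ((j:ℝ)+1) * (m:ℝ) / ((Mm+1:ℕ):ℝ) := by push_cast; ring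
      rw [e3, e4, Real.cos_sub, Real.cos_add]
      rw [show ((Mm:ℝ)+1) = ((Mm+1:ℕ):ℝ) by push_cast; ring]
      rw [e1]
      try rw [e2]
      set CA := Real.cos (Real.pi * ((j:ℝ)+1) * (kk:ℝ) / ((Mm+1:ℕ):ℝ))
      set CB := Real.cos (Real.pi * ((j:ℝ)+1) * (m:ℝ) / ((Mm+1:ℕ):ℝ))
      linear_combination (y kk * CA * CB / ((Mm+1:ℕ):ℝ)) * hsq
    rw [Finset.sum_congr rfl hstep, Finset.sum_comm]
    have hGsum : ∀ kk ∈ Finset.range (2*(Mm+1)),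
        (∑ j ∈ Finset.range Mm, (1/(2*((Mm+1:ℕ):ℝ))) * y kk *
            (Real.cos (Real.pi * (((kk:ℤ) - (m:ℤ)):ℝ) * ((j:ℝ)+1) / ((Mm+1:ℕ):ℝ))
             + Real.cos (Real.pi * (((kk:ℤ) + (m:ℤ)):ℝ) * ((j:ℝ)+1) / ((Mm+1:ℕ):ℝ))))
        = (if kk % 2 = m % 2 then (-(1/((Mm+1:ℕ):ℝ))) * y kk else 0)
          + (if kk = m then y kk / 2 else 0)
          + (if kk = (2*(Mm+1) - m) % (2*(Mm+1)) then y kk / 2 else 0) := by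
      intro kk hkk
      rw [← Finset.mul_sum, Finset.sum_add_distrib]
      have t1 := sum_cos_tail (Mm+1) (Nat.succ_pos _) ((kk:ℤ) - (m:ℤ))
      have t2 := sum_cos_tail (Mm+1) (Nat.succ_pos _) ((kk:ℤ) + (m:ℤ))
      simp only [Nat.add_sub_cancel] at t1 t2
      have ind := indicator_eval (Mm+1) kk m (Nat.succ_pos _) (Finset.mem_range.mp hkk) hm
      push_cast at t1 t2 ind ⊢
      rw [t1, t2, ind]
      have hrpar : ((2*(Mm+1) - m) % (2*(Mm+1))) % 2 = m % 2 := by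
        by_cases h0 : m = 0
        · subst h0; simp
        · rw [Nat.mod_eq_of_lt (show 2*(Mm+1)-m < 2*(Mm+1) by omega)]; omega
      set r := (2*(Mm+1) - m) % (2*(Mm+1)) with hrdef
      split_ifs <;> first
        | (exfalso; omega)
        | (field_simp; ring)
        | field_simp
    rw [Finset.sum_congr rfl hGsum, Finset.sum_add_distrib, Finset.sum_add_distrib]
    have hQ : (∑ kk ∈ Finset.range (2*(Mm+1)), if kk = m then y kk / 2 else 0) = y m / 2 := by
      rw [Finset.sum_ite_eq' (Finset.range (2*(Mm+1))) m (fun kk => y kk / 2),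
        if_pos (Finset.mem_range.mpr hm)]
    have hrlt : (2*(Mm+1) - m) % (2*(Mm+1)) < 2*(Mm+1) := Nat.mod_lt _ (by omega)
    have hR : (∑ kk ∈ Finset.range (2*(Mm+1)),
        if kk = (2*(Mm+1) - m) % (2*(Mm+1)) then y kk / 2 else 0) = y m / 2 := by
      rw [Finset.sum_ite_eq' (Finset.range (2*(Mm+1))) _ (fun kk => y kk / 2),
        if_pos (Finset.mem_range.mpr hrlt), hysym]
    rcases Nat.mod_two_eq_zero_or_one m with hpar | hpar
    · have hP : (∑ kk ∈ Finset.range (2*(Mm+1)),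
          if kk % 2 = m % 2 then (-(1/((Mm+1:ℕ):ℝ))) * y kk else 0)
          = (-(1/((Mm+1:ℕ):ℝ))) * ∑ l ∈ Finset.range (Mm+1), y (2*l) := by
        rw [sum_range_two_mul
          (fun kk => if kk % 2 = m % 2 then (-(1/((Mm+1:ℕ):ℝ))) * y kk else 0) (Mm+1)]
        have e1 : ∀ l ∈ Finset.range (Mm+1),
            (if (2*l) % 2 = m % 2 then (-(1/((Mm+1:ℕ):ℝ))) * y (2*l) else 0)
            = (-(1/((Mm+1:ℕ):ℝ))) * y (2*l) := fun l _ => if_pos (by omega)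
        have e2 : ∀ l ∈ Finset.range (Mm+1),
            (if (2*l+1) % 2 = m % 2 then (-(1/((Mm+1:ℕ):ℝ))) * y (2*l+1) else 0)
            = 0 := fun l _ => if_neg (by omega)
        rw [Finset.sum_congr rfl e1, Finset.sum_congr rfl e2, Finset.sum_const_zero,
          add_zero, ← Finset.mul_sum]
      rw [hP, hQ, hR, ha0, if_neg (by omega)]
      linarith
    · have hP : (∑ kk ∈ Finset.range (2*(Mm+1)),
          if kk % 2 = m % 2 then (-(1/((Mm+1:ℕ):ℝ))) * y kk else 0)
          = (-(1/((Mm+1:ℕ):ℝ))) * ∑ l ∈ Finset.range (Mm+1), y (2*l+1) := by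
        rw [sum_range_two_mul
          (fun kk => if kk % 2 = m % 2 then (-(1/((Mm+1:ℕ):ℝ))) * y kk else 0) (Mm+1)]
        have e1 : ∀ l ∈ Finset.range (Mm+1),
            (if (2*l) % 2 = m % 2 then (-(1/((Mm+1:ℕ):ℝ))) * y (2*l) else 0)
            = 0 := fun l _ => if_neg (by omega)
        have e2 : ∀ l ∈ Finset.range (Mm+1),
            (if (2*l+1) % 2 = m % 2 then (-(1/((Mm+1:ℕ):ℝ))) * y (2*l+1) else 0)
            = (-(1/((Mm+1:ℕ):ℝ))) * y (2*l+1) := fun l _ => if_pos (by omega)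
        rw [Finset.sum_congr rfl e1, Finset.sum_congr rfl e2, Finset.sum_const_zero,
          zero_add, ← Finset.mul_sum]
      have heps2 : eps = 1/((Mm+1:ℕ):ℝ) * (∑ l ∈ Finset.range (Mm+1), y (2*l))
          - 1/((Mm+1:ℕ):ℝ) * (∑ l ∈ Finset.range (Mm+1), y (2*l+1)) := by
        rw [heps, sum_range_two_mul (fun j => (-1:ℝ)^j * y j) (Mm+1)]
        have e1 : ∀ l ∈ Finset.range (Mm+1), (-1:ℝ)^(2*l) * y (2*l) = y (2*l) :=
          fun l _ => by rw [pow_mul]; norm_num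
        have e2 : ∀ l ∈ Finset.range (Mm+1), (-1:ℝ)^(2*l+1) * y (2*l+1) = -(y (2*l+1)) :=
          fun l _ => by rw [pow_succ, pow_mul]; norm_num
        rw [Finset.sum_congr rfl e1, Finset.sum_congr rfl e2, Finset.sum_neg_distrib]
        ring
      rw [hP, hQ, hR, ha0, if_pos hpar, heps2]
      ring
  intro k hk
  refine ⟨?_, ?_⟩
  · have h := key (2*k) (by omega)
    simpa [Nat.mul_mod_right] using h
  · have h := key (2*k+1) (by omega)
    have h2 : (2*k+1) % 2 = 1 := by omega
    rw [h2] at h; simpa using h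
end

section
/- Let b>0, M≥1 be an integer, N=2M, λ=2b/N, x_j=-b+jλ for 0≤j<N, let f:ℝ→ℝ be an even 2b-periodic function and y_j=f(x_j), and set ε_M=(1/M)·∑_{j=0}^{N-1}(-1)^j y_j. Suppose real numbers c_0,…,c_{M-1} are such that the cosine polynomial g(x)=∑_{j=0}^{M-1} c_j cos(jπx/b) satisfies g(x_{2k})=y_{2k} and g(x_{2k+1})=y_{2k+1}+ε_M for all 0≤k<M. Then necessarily c_0=(1/M)·∑_{j=0}^{M-1} y_{2j} and c_j=(2/N)·∑_{k=0}^{N-1}(-1)^j y_k cos(2πjk/N) for every 1≤j<M; that is, the interpolant with these fitting properties is unique. -/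
open Finset Real

private lemma pair_sum (h : ℕ → ℝ) (M : ℕ) :
    ∑ m ∈ range (2 * M), h m = ∑ k ∈ range M, (h (2 * k) + h (2 * k + 1)) := by
  induction M with
  | zero => simp
  | succ n ih =>
    rw [Nat.mul_succ, sum_range_succ, sum_range_succ, ih, sum_range_succ]
    ring

private lemma exp_one_iff (α : ℝ) :
    Complex.exp (↑α * Complex.I) = 1 ↔ ∃ k : ℤ, α = k * (2 * π) := by
  rw [Complex.exp_eq_one_iff]
  constructor
  · rintro ⟨k, hk⟩
    refine ⟨k, ?_⟩
    have h2 : (α : ℂ) = (k : ℂ) * (2 * (π : ℂ)) :=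
      mul_right_cancel₀ Complex.I_ne_zero (by linear_combination hk)
    exact_mod_cast h2
  · rintro ⟨k, rfl⟩
    exact ⟨k, by push_cast; ring⟩

private lemma shifted_geom (N : ℕ) (α β : ℝ)
    (h1 : Complex.exp (↑α * Complex.I) ≠ 1)
    (h2 : Complex.exp (↑α * Complex.I) ^ N = 1) :
    ∑ m ∈ range N, Real.cos (β + m * α) = 0 := by
  have hterm : ∀ m : ℕ, Real.cos (β + m * α)
      = (Complex.exp (↑β * Complex.I) * Complex.exp (↑α * Complex.I) ^ m).re := by
    intro m
    rw [← Complex.exp_nat_mul, ← Complex.exp_add]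
    have : (↑β * Complex.I + ↑m * (↑α * Complex.I)) = ↑(β + m * α) * Complex.I := by
      push_cast; ring
    rw [this, Complex.exp_ofReal_mul_I_re]
  calc ∑ m ∈ range N, Real.cos (β + m * α)
      = (Complex.exp (↑β * Complex.I) * ∑ m ∈ range N, Complex.exp (↑α * Complex.I) ^ m).re := by
        rw [Finset.mul_sum, Complex.re_sum]
        exact Finset.sum_congr rfl fun m _ => hterm m
    _ = 0 := by rw [geom_sum_eq h1, h2]; simp

private lemma sum_cos_mul (M n : ℕ) (hM : 0 < M) (hn0 : 0 < n) (hn : n < 2 * M) :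
    ∑ m ∈ range (2 * M), Real.cos ((n : ℝ) * m * (π / M)) = 0 := by
  have hM0 : (M : ℝ) ≠ 0 := Nat.cast_ne_zero.mpr hM.ne'
  have hMC : ((M : ℕ) : ℂ) ≠ 0 := Nat.cast_ne_zero.mpr hM.ne'
  have h1 : Complex.exp (↑((n : ℝ) * (π / M)) * Complex.I) ≠ 1 := by
    intro hone
    rw [exp_one_iff] at hone
    obtain ⟨k, hk⟩ := hone
    have hπ : (π : ℝ) ≠ 0 := Real.pi_ne_zero
    have hnk : (n : ℝ) = k * (2 * M) := by
      field_simp at hk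
      nlinarith [hk, Real.pi_pos]
    have hnk' : (n : ℤ) = k * (2 * M) := by exact_mod_cast hnk
    have hk1 : 1 ≤ k := by nlinarith [hnk', hn0, hM]
    nlinarith [hnk', hk1, hn]
  have h2 : Complex.exp (↑((n : ℝ) * (π / M)) * Complex.I) ^ (2 * M) = 1 := by
    rw [← Complex.exp_nat_mul]
    have : ((2 * M : ℕ) : ℂ) * (↑((n : ℝ) * (π / M)) * Complex.I)
        = ↑((n : ℝ) * (2 * π)) * Complex.I := by
      push_cast
      field_simp
    rw [this]
    exact (exp_one_iff _).mpr ⟨n, by push_cast; ring⟩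
  have := shifted_geom (2 * M) ((n : ℝ) * (π / M)) 0 h1 h2
  rw [← this]
  exact Finset.sum_congr rfl fun m _ => by ring_nf

private lemma sum_cos_odd (M l : ℕ) (hM : 0 < M) (hl0 : 0 < l) (hl : l < M) :
    ∑ k ∈ range M, Real.cos ((l : ℝ) * (2 * k + 1) * (π / M)) = 0 := by
  have hM0 : (M : ℝ) ≠ 0 := Nat.cast_ne_zero.mpr hM.ne'
  have hMC : ((M : ℕ) : ℂ) ≠ 0 := Nat.cast_ne_zero.mpr hM.ne'
  have h1 : Complex.exp (↑((l : ℝ) * (2 * π / M)) * Complex.I) ≠ 1 := by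
    intro hone
    rw [exp_one_iff] at hone
    obtain ⟨k, hk⟩ := hone
    have hlk : (l : ℝ) = k * M := by
      field_simp at hk
      nlinarith [hk, Real.pi_pos]
    have hlk' : (l : ℤ) = k * M := by exact_mod_cast hlk
    have hk1 : 1 ≤ k := by nlinarith [hlk', hl0, hM]
    nlinarith [hlk', hk1, hl]
  have h2 : Complex.exp (↑((l : ℝ) * (2 * π / M)) * Complex.I) ^ M = 1 := by
    rw [← Complex.exp_nat_mul]
    have : ((M : ℕ) : ℂ) * (↑((l : ℝ) * (2 * π / M)) * Complex.I)
        = ↑((l : ℝ) * (2 * π)) * Complex.I := by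
      push_cast
      field_simp
    rw [this]
    exact (exp_one_iff _).mpr ⟨l, by push_cast; ring⟩
  have := shifted_geom M ((l : ℝ) * (2 * π / M)) ((l : ℝ) * (π / M)) h1 h2
  rw [← this]
  refine Finset.sum_congr rfl fun k _ => ?_
  congr 1
  field_simp
  ring

private lemma ortho (M : ℕ) (hM : 0 < M) (j l : ℕ) (hj : j < M) (hl : l < M) :
    ∑ m ∈ range (2 * M), Real.cos ((j : ℝ) * m * (π / M)) * Real.cos ((l : ℝ) * m * (π / M)) =
      if j = l then (if j = 0 then (2 * M : ℝ) else (M : ℝ)) else 0 := by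
  rcases eq_or_ne j l with rfl | hne
  · rcases eq_or_ne j 0 with rfl | hj0
    · simp
    · have hsplit : ∀ m : ℕ, Real.cos ((j : ℝ) * m * (π / M)) * Real.cos ((j : ℝ) * m * (π / M))
          = (Real.cos (((2 * j : ℕ) : ℝ) * m * (π / M)) + 1) / 2 := by
        intro m
        have h1 : ((2 * j : ℕ) : ℝ) * m * (π / M)
            = (j : ℝ) * m * (π / M) + (j : ℝ) * m * (π / M) := by push_cast; ring
        rw [h1, Real.cos_add]
        have := Real.sin_sq_add_cos_sq ((j : ℝ) * m * (π / M))
        nlinarith [this]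
      simp_rw [hsplit]
      rw [← Finset.sum_div, Finset.sum_add_distrib,
        sum_cos_mul M (2 * j) hM (by omega) (by omega)]
      simp only [Finset.sum_const, Finset.card_range, nsmul_eq_mul, mul_one, zero_add,
        if_pos rfl, if_neg hj0]
      push_cast
      ring
  · have key : ∀ (a c : ℕ), a < M → c < M → a < c →
        ∑ m ∈ range (2 * M), Real.cos ((a : ℝ) * m * (π / M)) * Real.cos ((c : ℝ) * m * (π / M)) = 0 := by
      intro a d ha hd had
      have hsplit : ∀ m : ℕ, Real.cos ((a : ℝ) * m * (π / M)) * Real.cos ((d : ℝ) * m * (π / M))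
          = (Real.cos (((a + d : ℕ) : ℝ) * m * (π / M)) + Real.cos (((d - a : ℕ) : ℝ) * m * (π / M))) / 2 := by
        intro m
        have h1 : ((a + d : ℕ) : ℝ) * m * (π / M)
            = (a : ℝ) * m * (π / M) + (d : ℝ) * m * (π / M) := by push_cast; ring
        have h2 : ((d - a : ℕ) : ℝ) * m * (π / M)
            = (d : ℝ) * m * (π / M) - (a : ℝ) * m * (π / M) := by
          rw [Nat.cast_sub had.le]; ring
        rw [h1, h2, Real.cos_add, Real.cos_sub]
        ring
      simp_rw [hsplit]
      rw [← Finset.sum_div, Finset.sum_add_distrib,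
        sum_cos_mul M (a + d) hM (by omega) (by omega),
        sum_cos_mul M (d - a) hM (by omega) (by omega)]
      norm_num
    rcases hne.lt_or_gt with h | h
    · rw [key j l hj hl h]; simp [hne]
    · have := key l j hl hj h
      rw [if_neg hne, ← this]
      exact Finset.sum_congr rfl fun m _ => by ring

/-- uniqueness of the adjusted trigonometric interpolant of an even
`2b`-periodic function: any cosine polynomial of degree `< M` that fits all
even-indexed nodes exactly and is shifted by `ε_M` at all odd-indexed nodes has
the prescribed coefficients. -/
theorem adjusted_interpolant_even_unique
    (b : ℝ) (hb : 0 < b) (M : ℕ) (hM : 1 ≤ M)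
    (f : ℝ → ℝ)
    (hper : ∀ t, f (t + 2 * b) = f t)
    (heven : ∀ t, f (-t) = f t)
    (x : ℕ → ℝ) (hx : ∀ j, x j = -b + (j : ℝ) * (2 * b / (2 * (M : ℝ))))
    (y : ℕ → ℝ) (hy : ∀ j, y j = f (x j))
    (eps : ℝ)
    (heps : eps = (1 / (M : ℝ)) * ∑ j ∈ Finset.range (2 * M), (-1 : ℝ) ^ j * y j)
    (c : ℕ → ℝ)
    (g : ℝ → ℝ)
    (hg : ∀ t, g t = ∑ j ∈ Finset.range M, c j * Real.cos ((j : ℝ) * Real.pi * t / b))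
    (hfit_even : ∀ k, k < M → g (x (2 * k)) = y (2 * k))
    (hfit_odd : ∀ k, k < M → g (x (2 * k + 1)) = y (2 * k + 1) + eps) :
    c 0 = (1 / (M : ℝ)) * ∑ j ∈ Finset.range M, y (2 * j) ∧
      ∀ j, 1 ≤ j → j < M →
        c j = (2 / (2 * (M : ℝ))) * ∑ k ∈ Finset.range (2 * M),
          (-1 : ℝ) ^ j * y k * Real.cos (2 * Real.pi * (j : ℝ) * (k : ℝ) / (2 * (M : ℝ))) := by
  have hMpos : 0 < M := hM
  have hM0 : (M : ℝ) ≠ 0 := Nat.cast_ne_zero.mpr hMpos.ne'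
  have hb0 : b ≠ 0 := hb.ne'
  have hcosnode : ∀ (j m : ℕ), Real.cos ((j : ℝ) * π * (x m) / b)
      = (-1 : ℝ) ^ j * Real.cos ((j : ℝ) * m * (π / M)) := by
    intro j m
    have hang : (j : ℝ) * π * (x m) / b = -((j : ℝ) * π - (j : ℝ) * m * (π / M)) := by
      rw [hx m]; field_simp; ring
    rw [hang, Real.cos_neg, Real.cos_nat_mul_pi_sub]
  have hgnode : ∀ m : ℕ, g (x m)
      = ∑ j ∈ range M, c j * ((-1 : ℝ) ^ j * Real.cos ((j : ℝ) * m * (π / M))) := by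
    intro m
    rw [hg]
    exact Finset.sum_congr rfl fun j _ => by rw [hcosnode]
  have hnode : ∀ m, m < 2 * M →
      ∑ j ∈ range M, c j * ((-1 : ℝ) ^ j * Real.cos ((j : ℝ) * m * (π / M)))
        = y m + (if m % 2 = 1 then eps else 0) := by
    intro m hm
    rcases Nat.even_or_odd m with ⟨k, hk⟩ | ⟨k, hk⟩
    · have hmk : m = 2 * k := by omega
      have hkM : k < M := by omega
      rw [hmk, ← hgnode, hfit_even k hkM, if_neg (by omega)]
      ring
    · have hmk : m = 2 * k + 1 := by omega
      have hkM : k < M := by omega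
      rw [hmk, ← hgnode, hfit_odd k hkM, if_pos (by omega)]
  have hEq : ∀ l, l < M →
      (∑ m ∈ range (2 * M), y m * Real.cos ((l : ℝ) * m * (π / M)))
        + (∑ m ∈ range (2 * M), (if m % 2 = 1 then eps else 0) * Real.cos ((l : ℝ) * m * (π / M)))
      = c l * (-1 : ℝ) ^ l * (if l = 0 then (2 * M : ℝ) else (M : ℝ)) := by
    intro l hl
    have h1 : ∀ m ∈ range (2 * M),
        (y m + (if m % 2 = 1 then eps else 0)) * Real.cos ((l : ℝ) * m * (π / M))
        = ∑ j ∈ range M, c j * (-1 : ℝ) ^ j *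
            (Real.cos ((j : ℝ) * m * (π / M)) * Real.cos ((l : ℝ) * m * (π / M))) := by
      intro m hm
      rw [← hnode m (Finset.mem_range.mp hm), Finset.sum_mul]
      exact Finset.sum_congr rfl fun j _ => by ring
    have h2 : ∑ m ∈ range (2 * M),
        (y m + (if m % 2 = 1 then eps else 0)) * Real.cos ((l : ℝ) * m * (π / M))
        = c l * (-1 : ℝ) ^ l * (if l = 0 then (2 * M : ℝ) else (M : ℝ)) := by
      rw [Finset.sum_congr rfl h1, Finset.sum_comm]
      have h3 : ∀ j ∈ range M, (∑ m ∈ range (2 * M), c j * (-1 : ℝ) ^ j *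
            (Real.cos ((j : ℝ) * m * (π / M)) * Real.cos ((l : ℝ) * m * (π / M))))
          = if j = l then c l * (-1 : ℝ) ^ l * (if l = 0 then (2 * M : ℝ) else (M : ℝ)) else 0 := by
        intro j hj
        rw [← Finset.mul_sum, ortho M hMpos j l (Finset.mem_range.mp hj) hl]
        rcases eq_or_ne j l with rfl | hne
        · simp
        · simp [hne]
      rw [Finset.sum_congr rfl h3, Finset.sum_ite_eq' (range M) l]
      simp [Finset.mem_range.mpr hl]
    rw [← h2, ← Finset.sum_add_distrib]
    exact Finset.sum_congr rfl fun m _ => by ring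
  constructor
  · -- l = 0
    have h := hEq 0 hMpos
    simp only [Nat.cast_zero, zero_mul, Real.cos_zero, mul_one, pow_zero, if_pos rfl] at h
    have he : ∑ m ∈ range (2 * M), (if m % 2 = 1 then eps else 0) = (M : ℝ) * eps := by
      rw [pair_sum (fun m => if m % 2 = 1 then eps else 0) M]
      have h4 : ∀ k ∈ range M,
          ((if (2 * k) % 2 = 1 then eps else 0) + (if (2 * k + 1) % 2 = 1 then eps else 0)) = eps := by
        intro k _
        rw [if_neg (by omega), if_pos (by omega)]
        ring
      rw [Finset.sum_congr rfl h4, Finset.sum_const, Finset.card_range, nsmul_eq_mul]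
    have hpair : (∑ m ∈ range (2 * M), y m) + (∑ m ∈ range (2 * M), (-1 : ℝ) ^ m * y m)
        = 2 * ∑ j ∈ range M, y (2 * j) := by
      rw [pair_sum y M, pair_sum (fun m => (-1 : ℝ) ^ m * y m) M,
        ← Finset.sum_add_distrib, Finset.mul_sum]
      refine Finset.sum_congr rfl fun k _ => ?_
      have h5 : (-1 : ℝ) ^ (2 * k) = 1 := by rw [pow_mul]; norm_num
      have h6 : (-1 : ℝ) ^ (2 * k + 1) = -1 := by rw [pow_succ, h5]; ring
      rw [h5, h6]
      ring
    have hMeps : (M : ℝ) * eps = ∑ j ∈ range (2 * M), (-1 : ℝ) ^ j * y j := by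
      rw [heps]; field_simp
    rw [he, if_pos trivial] at h
    field_simp
    linear_combination (-(1 : ℝ)/2) * h + (1/2 : ℝ) * hMeps + (1/2 : ℝ) * hpair
  · intro j hj1 hjM
    have hepsum : ∑ m ∈ range (2 * M),
        (if m % 2 = 1 then eps else 0) * Real.cos ((j : ℝ) * m * (π / M))
        = eps * ∑ k ∈ range M, Real.cos ((j : ℝ) * (2 * k + 1) * (π / M)) := by
      rw [pair_sum (fun m => (if m % 2 = 1 then eps else 0) * Real.cos ((j : ℝ) * m * (π / M))) M,
        Finset.mul_sum]
      refine Finset.sum_congr rfl fun k _ => ?_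
      rw [if_neg (by omega), if_pos (by omega)]
      push_cast
      ring_nf
    have h := hEq j hjM
    rw [hepsum, sum_cos_odd M j hMpos hj1 hjM, mul_zero, add_zero, if_neg (by omega)] at h
    have hang : ∀ k : ℕ, 2 * π * (j : ℝ) * k / (2 * (M : ℝ)) = (j : ℝ) * k * (π / M) := by
      intro k; field_simp
    have hS : ∑ k ∈ range (2 * M), (-1 : ℝ) ^ j * y k * Real.cos (2 * π * (j : ℝ) * k / (2 * (M : ℝ)))
        = (-1 : ℝ) ^ j * ∑ m ∈ range (2 * M), y m * Real.cos ((j : ℝ) * m * (π / M)) := by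
      rw [Finset.mul_sum]
      exact Finset.sum_congr rfl fun k _ => by rw [hang k]; ring
    rw [hS, h]
    have hsq : (-1 : ℝ) ^ j * (-1 : ℝ) ^ j = 1 := by rw [← mul_pow]; norm_num
    have hred : (-1 : ℝ) ^ j * (c j * (-1 : ℝ) ^ j * (M : ℝ)) = c j * (M : ℝ) := by
      calc (-1 : ℝ) ^ j * (c j * (-1 : ℝ) ^ j * (M : ℝ))
          = (c j * (M : ℝ)) * ((-1 : ℝ) ^ j * (-1 : ℝ) ^ j) := by ring
        _ = c j * (M : ℝ) := by rw [hsq, mul_one]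
    rw [hred]
    field_simp
end

section
/- Let b>0 and K≥1 be an integer, and let f:ℝ→ℝ be an even 2b-periodic function that is (K+1)-times differentiable with |f^{(K+1)}(x)|≤D_{K+1} for all x. Then there exists a constant C>0 (depending only on f, b and K) such that for every integer M≥1, with N=2M, x_k=-b+k(2b/N), y_k=f(x_k), and a_j=(2/N)·∑_{k=0}^{N-1}(-1)^j y_k cos(2πjk/N), one has |a_j| ≤ C / ( N^{K+1} · sin^{K+1}(πj/N) ) for all 1≤j<M. -/
noncomputable def cdeDelta (h : ℝ) (g : ℝ → ℝ) : ℝ → ℝ := fun x => g x - g (x - h)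

lemma cde_iterDeriv_delta (h : ℝ) : ∀ (i : ℕ) (g : ℝ → ℝ),
    (∀ j < i, Differentiable ℝ (iteratedDeriv j g)) →
    iteratedDeriv i (cdeDelta h g) =
      fun x => iteratedDeriv i g x - iteratedDeriv i g (x - h) := by
  intro i
  induction i with
  | zero => intro g _; simp only [iteratedDeriv_zero]; rfl
  | succ n ih =>
    intro g hg
    rw [iteratedDeriv_succ, ih g (fun j hj => hg j (Nat.lt_succ_of_lt hj))]
    funext x
    have hA : Differentiable ℝ (iteratedDeriv n g) := hg n (Nat.lt_succ_self n)
    have h1 : deriv (fun x => iteratedDeriv n g x - iteratedDeriv n g (x - h)) x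
        = deriv (iteratedDeriv n g) x - deriv (fun x => iteratedDeriv n g (x - h)) x := by
      apply deriv_sub hA.differentiableAt
      exact (hA.comp (differentiable_id.sub_const h)).differentiableAt
    rw [h1, deriv_comp_sub_const, iteratedDeriv_succ]

lemma cde_delta_iter_bound (h : ℝ) (hh : 0 ≤ h) :
    ∀ (m : ℕ) (D : ℝ) (g : ℝ → ℝ),
    (∀ i < m, Differentiable ℝ (iteratedDeriv i g)) →
    (∀ t, |iteratedDeriv m g t| ≤ D) →
    ∀ x, |(cdeDelta h)^[m] g x| ≤ D * h ^ m := by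
  intro m
  induction m with
  | zero => intro D g _ hbd x; simpa using hbd x
  | succ n ih =>
    intro D g hg hbd x
    rw [Function.iterate_succ_apply]
    have key : ∀ t, |iteratedDeriv n (cdeDelta h g) t| ≤ D * h := by
      intro t
      rw [cde_iterDeriv_delta h n g (fun j hj => hg j (Nat.lt_succ_of_lt hj))]
      have hB : Differentiable ℝ (iteratedDeriv n g) := hg n (Nat.lt_succ_self n)
      have := Convex.norm_image_sub_le_of_norm_deriv_le
        (f := iteratedDeriv n g) (s := Set.univ) (C := D)
        (fun y _ => hB.differentiableAt)
        (fun y _ => by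
          rw [← iteratedDeriv_succ]
          simpa using hbd y)
        convex_univ (Set.mem_univ (t - h)) (Set.mem_univ t)
      simpa [abs_of_nonneg hh] using this
    have hdiffs : ∀ i < n, Differentiable ℝ (iteratedDeriv i (cdeDelta h g)) := by
      intro i hi
      rw [cde_iterDeriv_delta h i g (fun j hj => hg j (hj.trans (hi.trans (Nat.lt_succ_self n))))]
      have hA : Differentiable ℝ (iteratedDeriv i g) := hg i (hi.trans (Nat.lt_succ_self n))
      exact hA.sub (hA.comp (differentiable_id.sub_const h))
    have := ih (D * h) (cdeDelta h g) hdiffs key x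
    calc |(cdeDelta h)^[n] (cdeDelta h g) x| ≤ D * h * h ^ n := this
      _ = D * h ^ (n + 1) := by ring

lemma cde_delta_periodic (b h : ℝ) : ∀ (m : ℕ) (g : ℝ → ℝ),
    (∀ t, g (t + 2 * b) = g t) → ∀ t, (cdeDelta h)^[m] g (t + 2 * b) = (cdeDelta h)^[m] g t := by
  intro m
  induction m with
  | zero => intro g hg t; simpa using hg t
  | succ n ih =>
    intro g hg t
    rw [Function.iterate_succ_apply']
    have hp := ih g hg
    show (cdeDelta h)^[n] g (t+2*b) - (cdeDelta h)^[n] g (t+2*b - h)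
        = (cdeDelta h)^[n] g t - (cdeDelta h)^[n] g (t - h)
    have harg : t + 2*b - h = t - h + 2*b := by ring
    rw [harg, hp, hp]

lemma cde_sum_step (b h : ℝ) (N : ℕ) (hN : 1 ≤ N) (hh : (N : ℝ) * h = 2 * b)
    (z : ℂ) (hz : z ^ N = 1) (g : ℝ → ℝ) (hper : ∀ t, g (t + 2 * b) = g t) :
    (1 - z) * ∑ k ∈ Finset.range N, (g (-b + (k : ℝ) * h) : ℂ) * z ^ k =
      ∑ k ∈ Finset.range N, ((cdeDelta h g (-b + (k : ℝ) * h) : ℝ) : ℂ) * z ^ k := by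
  obtain ⟨n, rfl⟩ : ∃ n, N = n + 1 := ⟨N - 1, (Nat.succ_pred_eq_of_pos hN).symm⟩
  have key : z * ∑ k ∈ Finset.range (n+1), (g (-b + (k : ℝ) * h) : ℂ) * z ^ k
      = ∑ k ∈ Finset.range (n+1), (g (-b + (k : ℝ) * h - h) : ℂ) * z ^ k := by
    rw [Finset.mul_sum, Finset.sum_range_succ, Finset.sum_range_succ']
    congr 1
    · apply Finset.sum_congr rfl
      intro k _
      have harg : -b + ((k : ℝ) + 1) * h - h = -b + (k : ℝ) * h := by ring
      push_cast
      rw [harg]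
      ring
    · have h1 : -b + (0 : ℝ) * h - h = -b - h := by ring
      have h2 : (-b - h) + 2 * b = -b + (n : ℝ) * h := by
        have : ((n : ℝ) + 1) * h = 2 * b := by push_cast at hh ⊢; linarith [hh]
        linarith [this]
      push_cast
      rw [h1, ← h2, hper (-b - h)]
      rw [show z * ((g (-b - h) : ℂ) * z ^ n) = (g (-b - h) : ℂ) * z ^ (n + 1) by ring, hz]
      ring
  have expand : (1 - z) * ∑ k ∈ Finset.range (n+1), (g (-b + (k : ℝ) * h) : ℂ) * z ^ k
      = (∑ k ∈ Finset.range (n+1), (g (-b + (k : ℝ) * h) : ℂ) * z ^ k)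
        - ∑ k ∈ Finset.range (n+1), (g (-b + (k : ℝ) * h - h) : ℂ) * z ^ k := by
    rw [sub_mul, one_mul, key]
  rw [expand, ← Finset.sum_sub_distrib]
  apply Finset.sum_congr rfl
  intro k _
  show _ = ((g (-b + (k:ℝ)*h) - g (-b + (k:ℝ)*h - h) : ℝ) : ℂ) * z ^ k
  push_cast
  ring

lemma cde_sum_iter (b h : ℝ) (N : ℕ) (hN : 1 ≤ N) (hh : (N : ℝ) * h = 2 * b)
    (z : ℂ) (hz : z ^ N = 1) :
    ∀ (m : ℕ) (g : ℝ → ℝ), (∀ t, g (t + 2 * b) = g t) →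
    (1 - z) ^ m * ∑ k ∈ Finset.range N, (g (-b + (k : ℝ) * h) : ℂ) * z ^ k =
      ∑ k ∈ Finset.range N, (((cdeDelta h)^[m] g (-b + (k : ℝ) * h) : ℝ) : ℂ) * z ^ k := by
  intro m
  induction m with
  | zero => intro g hg; simp
  | succ n ih =>
    intro g hg
    have hper' : ∀ t, (cdeDelta h)^[n] g (t + 2 * b) = (cdeDelta h)^[n] g t :=
      cde_delta_periodic b h n g hg
    calc (1 - z) ^ (n+1) * ∑ k ∈ Finset.range N, (g (-b + (k : ℝ) * h) : ℂ) * z ^ k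
        = (1 - z) * ((1 - z) ^ n * ∑ k ∈ Finset.range N, (g (-b + (k : ℝ) * h) : ℂ) * z ^ k) := by ring
      _ = (1 - z) * ∑ k ∈ Finset.range N, (((cdeDelta h)^[n] g (-b + (k : ℝ) * h) : ℝ) : ℂ) * z ^ k := by rw [ih g hg]
      _ = ∑ k ∈ Finset.range N, ((cdeDelta h ((cdeDelta h)^[n] g) (-b + (k : ℝ) * h) : ℝ) : ℂ) * z ^ k :=
          cde_sum_step b h N hN hh z hz _ hper'
      _ = _ := by
          apply Finset.sum_congr rfl
          intro k _
          rw [← Function.iterate_succ_apply' (cdeDelta h) n g]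

set_option maxHeartbeats 1000000 in
/-- decay of the interpolation coefficients of an even
`2b`-periodic function whose `(K+1)`-th derivative is bounded:
`|a_j| ≤ C / (N^(K+1) · sin^(K+1)(πj/N))` for `1 ≤ j < M`, `N = 2M`. -/
theorem coefficient_decay_even
    (b D : ℝ) (hb : 0 < b) (K : ℕ) (hK : 1 ≤ K)
    (f : ℝ → ℝ)
    (hper : ∀ t, f (t + 2 * b) = f t)
    (heven : ∀ t, f (-t) = f t)
    (hdiff : ∀ i, i ≤ K → Differentiable ℝ (iteratedDeriv i f))
    (hbd : ∀ t, |iteratedDeriv (K + 1) f t| ≤ D) :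
    ∃ C > (0 : ℝ), ∀ M : ℕ, 1 ≤ M → ∀ j, 1 ≤ j → j < M →
      |(2 / (2 * (M : ℝ))) * ∑ k ∈ Finset.range (2 * M),
          (-1 : ℝ) ^ j * f (-b + (k : ℝ) * (2 * b / (2 * (M : ℝ)))) *
            Real.cos (2 * Real.pi * (j : ℝ) * (k : ℝ) / (2 * (M : ℝ)))| ≤
        C / ((2 * (M : ℝ)) ^ (K + 1) *
          (Real.sin (Real.pi * (j : ℝ) / (2 * (M : ℝ)))) ^ (K + 1)) := by
  have hD0 : 0 ≤ D := le_trans (abs_nonneg _) (hbd 0)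
  refine ⟨2 * D * b ^ (K+1) + 1, by positivity, ?_⟩
  intro M hM j hj1 hj2
  have hMpos : (0:ℝ) < (M:ℝ) := by exact_mod_cast Nat.pos_of_ne_zero (by omega)
  set R : ℝ := 2 * (M:ℝ) with hR
  have hR0 : (0:ℝ) < R := by positivity
  set h : ℝ := 2 * b / R with hhdef
  have hh0 : 0 ≤ h := by positivity
  have hNR : ((2*M : ℕ) : ℝ) = R := by push_cast [hR]; ring
  have hRh : R * h = 2 * b := by rw [hhdef]; field_simp
  set θ : ℝ := 2 * Real.pi * j / R with hθ
  set x : ℝ := Real.pi * j / R with hxdef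
  have hθx : θ = 2 * x := by rw [hθ, hxdef]; ring
  set z : ℂ := Complex.exp ((θ:ℝ) * Complex.I) with hz
  have hj0 : (0:ℝ) < (j:ℝ) := by exact_mod_cast Nat.pos_of_ne_zero (by omega)
  have hjR : (j:ℝ) < R := by
    rw [hR]
    have : (j:ℝ) < (M:ℝ) := by exact_mod_cast hj2
    linarith
  have hx0 : 0 < x := by
    rw [hxdef]; exact div_pos (by positivity) hR0
  have hxπ : x < Real.pi := by
    rw [hxdef, div_lt_iff₀ hR0]
    nlinarith [Real.pi_pos]
  set s : ℝ := Real.sin x with hs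
  have hs0 : 0 < s := Real.sin_pos_of_pos_of_lt_pi hx0 hxπ
  -- z ^ N = 1
  have hM0c : ((M:ℕ):ℂ) ≠ 0 := by exact_mod_cast Nat.cast_ne_zero.mpr (by omega)
  have hzN : z ^ (2*M) = 1 := by
    rw [hz, ← Complex.exp_nat_mul]
    have harg : ((2*M : ℕ) : ℂ) * ((θ:ℝ) * Complex.I) = (j:ℤ) * (2 * Real.pi * Complex.I) := by
      push_cast [hθ, hR]
      field_simp
    rw [harg, Complex.exp_int_mul_two_pi_mul_I]
  -- |1 - z| = 2 s
  have habs1z : ‖1 - z‖ = 2 * s := by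
    have hre : (1 - z).re = 1 - Real.cos θ := by
      simp [hz, Complex.sub_re, Complex.exp_ofReal_mul_I_re]
    have him : (1 - z).im = -Real.sin θ := by
      simp [hz, Complex.sub_im, Complex.exp_ofReal_mul_I_im]
    have hsq : ‖1 - z‖ ^ 2 = (2 * s) ^ 2 := by
      rw [Complex.sq_norm, Complex.normSq_apply, hre, him]
      have h1 := Real.sin_sq_add_cos_sq θ
      have h2 := Real.cos_two_mul x
      have h3 := Real.sin_sq_add_cos_sq x
      rw [hθx] at h1 ⊢
      nlinarith [h1, h2, h3]
    have hA : 0 ≤ ‖1 - z‖ := norm_nonneg _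
    have h2s : (0:ℝ) ≤ 2*s := by positivity
    calc ‖1-z‖ = Real.sqrt (‖1-z‖^2) := (Real.sqrt_sq hA).symm
      _ = Real.sqrt ((2*s)^2) := by rw [hsq]
      _ = 2*s := Real.sqrt_sq h2s
  -- the complex sum
  set T : ℂ := ∑ k ∈ Finset.range (2*M), ((f (-b + (k:ℝ) * h) : ℝ) : ℂ) * z ^ k with hT
  set A : ℝ := ‖T‖ with hA
  have hA0 : 0 ≤ A := norm_nonneg _
  have hiter := cde_sum_iter b h (2*M) (by omega) (by rw [hNR]; exact hRh) z hzN (K+1) f hper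
  have hbound : ∀ t, |(cdeDelta h)^[K+1] f t| ≤ D * h^(K+1) :=
    cde_delta_iter_bound h hh0 (K+1) D f (fun i hi => hdiff i (Nat.lt_succ_iff.mp hi)) hbd
  have key : (2*s)^(K+1) * A ≤ R * (D * h^(K+1)) := by
    have h1 : ‖(1-z)^(K+1) * T‖ = (2*s)^(K+1) * A := by
      rw [norm_mul, norm_pow, habs1z, hA]
    rw [← h1, hT, hiter]
    calc ‖∑ k ∈ Finset.range (2*M), (((cdeDelta h)^[K+1] f (-b + (k:ℝ)*h) : ℝ) : ℂ) * z^k‖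
        ≤ ∑ k ∈ Finset.range (2*M), ‖(((cdeDelta h)^[K+1] f (-b + (k:ℝ)*h) : ℝ) : ℂ) * z^k‖ :=
          norm_sum_le _ _
      _ ≤ ∑ _k ∈ Finset.range (2*M), D * h^(K+1) := by
          apply Finset.sum_le_sum
          intro k _
          rw [norm_mul, norm_pow, Complex.norm_real, Real.norm_eq_abs, hz, Complex.norm_exp_ofReal_mul_I, one_pow, mul_one]
          exact hbound _
      _ = R * (D * h^(K+1)) := by
          rw [Finset.sum_const, Finset.card_range, nsmul_eq_mul, hNR]
  -- real part
  have hsum : ∑ k ∈ Finset.range (2*M), (-1:ℝ)^j * f (-b + (k:ℝ)*h) * Real.cos (2*Real.pi*(j:ℝ)*(k:ℝ)/R)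
      = (-1:ℝ)^j * T.re := by
    rw [hT, Complex.re_sum, Finset.mul_sum]
    apply Finset.sum_congr rfl
    intro k _
    have hzk : z ^ k = Complex.exp ((((k:ℝ) * θ : ℝ) : ℂ) * Complex.I) := by
      rw [hz, ← Complex.exp_nat_mul]; congr 1; push_cast; ring
    have hterm : (((f (-b + (k:ℝ)*h) : ℝ) : ℂ) * z ^ k).re
        = f (-b + (k:ℝ)*h) * Real.cos ((k:ℝ)*θ) := by
      rw [hzk, Complex.mul_re, Complex.ofReal_re, Complex.ofReal_im,
        Complex.exp_ofReal_mul_I_re, Complex.exp_ofReal_mul_I_im]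
      ring
    rw [hterm]
    have harg : 2*Real.pi*(j:ℝ)*(k:ℝ)/R = (k:ℝ)*θ := by
      rw [hθ]; field_simp
    rw [harg]; ring
  have hfin : |(2/R) * ∑ k ∈ Finset.range (2*M),
      (-1:ℝ)^j * f (-b + (k:ℝ)*h) * Real.cos (2*Real.pi*(j:ℝ)*(k:ℝ)/R)| ≤ (2/R) * A := by
    rw [hsum, abs_mul, abs_mul, abs_pow, abs_neg, abs_one, one_pow, one_mul,
      abs_of_pos (by positivity : (0:ℝ) < 2/R)]
    exact mul_le_mul_of_nonneg_left (Complex.abs_re_le_norm T) (by positivity)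
  have hAs : s^(K+1) * A * R^K ≤ D * b^(K+1) := by
    have h2 : (2:ℝ)^(K+1) * (s^(K+1) * A) ≤ R * (D * h^(K+1)) := by
      calc (2:ℝ)^(K+1) * (s^(K+1)*A) = (2*s)^(K+1) * A := by rw [mul_pow]; ring
        _ ≤ _ := key
    have h3 : (2:ℝ)^(K+1) * (s^(K+1) * A * R^K) ≤ (2:ℝ)^(K+1) * (D * b^(K+1)) := by
      have h4 := mul_le_mul_of_nonneg_right h2 (le_of_lt (pow_pos hR0 K))
      calc (2:ℝ)^(K+1) * (s^(K+1)*A*R^K) = (2:ℝ)^(K+1)*(s^(K+1)*A)*R^K := by ring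
        _ ≤ R * (D * h^(K+1)) * R^K := h4
        _ = D * (R*h)^(K+1) := by rw [mul_pow]; ring
        _ = (2:ℝ)^(K+1) * (D * b^(K+1)) := by rw [hRh, mul_pow]; ring
    exact le_of_mul_le_mul_left h3 (by positivity)
  rw [div_eq_mul_inv] at *
  rw [le_div_iff₀ (by positivity : (0:ℝ) < R^(K+1) * s^(K+1))]
  calc |(2/R) * ∑ k ∈ Finset.range (2*M),
        (-1:ℝ)^j * f (-b + (k:ℝ)*h) * Real.cos (2*Real.pi*(j:ℝ)*(k:ℝ)/R)| * (R^(K+1) * s^(K+1))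
      ≤ ((2/R)*A) * (R^(K+1)*s^(K+1)) := mul_le_mul_of_nonneg_right hfin (by positivity)
    _ = 2 * (s^(K+1) * A * R^K) := by field_simp; ring
    _ ≤ 2 * (D * b^(K+1)) := by linarith [hAs]
    _ ≤ 2*D*b^(K+1) + 1 := by linarith
end

section
/- Let b>0, M≥1 be an integer, N=2M, x_j=-b+j(2b/N) for 0≤j<N, let f:ℝ→ℝ be an even 2b-periodic function and y_j=f(x_j). Define Ã_0=(2/N)·∑_{k=0}^{N-1} y_k, Ã_j=(2/N)·∑_{k=0}^{N-1}(-1)^j y_k cos(2πjk/N) for 1≤j<M, f̃_M(x)=∑_{j=0}^{M-1} Ã_j cos(jπx/b), and ỹ_l=f̃_M(x_l). Then for every 0≤k<M: ỹ_{2k} − y_{2k} = (1/M)·∑_{j=0}^{M-1} y_{2j+1}. -/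
open Finset

private lemma cos_nat_mul_pi' (n : ℕ) : Real.cos ((n:ℝ) * Real.pi) = (-1)^n := by
  induction n with
  | zero => simp
  | succ n ih =>
    push_cast
    rw [add_mul, one_mul, Real.cos_add_pi, ih]
    ring

private lemma sum_range_even_odd (M : ℕ) (g : ℕ → ℝ) :
    ∑ k ∈ Finset.range (2*M), g k =
      ∑ j ∈ Finset.range M, g (2*j) + ∑ j ∈ Finset.range M, g (2*j+1) := by
  induction M with
  | zero => simp
  | succ n ih =>
    rw [show 2*(n+1) = (2*n+1)+1 from by ring, Finset.sum_range_succ, Finset.sum_range_succ,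
      ih, Finset.sum_range_succ, Finset.sum_range_succ]
    ring

private lemma cos_mul_cos' (a c : ℝ) :
    Real.cos a * Real.cos c = (Real.cos (a + c) + Real.cos (a - c)) / 2 := by
  rw [Real.cos_add, Real.cos_sub]; ring


private lemma cos_geom_sum (M : ℕ) (hM : 1 ≤ M) (m : ℤ) :
    ∑ j ∈ Finset.range M, Real.cos (Real.pi * (j:ℝ) * (m:ℝ) / (M:ℝ)) =
      if (2 * (M:ℤ)) ∣ m then (M:ℝ) else if Odd m then 1 else 0 := by
  have hMR : (M:ℝ) ≠ 0 := Nat.cast_ne_zero.mpr (by omega)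
  have hpi := Real.pi_ne_zero
  by_cases hdvd : (2 * (M:ℤ)) ∣ m
  · rw [if_pos hdvd]
    obtain ⟨t, ht⟩ := hdvd
    have : ∀ j ∈ Finset.range M, Real.cos (Real.pi * (j:ℝ) * (m:ℝ) / (M:ℝ)) = 1 := by
      intro j _
      have harg : Real.pi * (j:ℝ) * (m:ℝ) / (M:ℝ) = ((j * t : ℤ) : ℝ) * (2 * Real.pi) := by
        have hm : (m:ℝ) = 2 * (M:ℝ) * (t:ℝ) := by exact_mod_cast congrArg (Int.cast : ℤ → ℝ) ht
        rw [hm]; push_cast; field_simp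
      rw [harg, Real.cos_int_mul_two_pi]
    rw [Finset.sum_congr rfl this, Finset.sum_const, Finset.card_range]
    simp
  · rw [if_neg hdvd]
    set θ : ℝ := Real.pi * (m:ℝ) / (M:ℝ) with hθ
    set z : ℂ := Complex.exp (θ * Complex.I) with hzdef
    have hz : z ≠ 1 := by
      rw [hzdef]
      intro h
      rw [Complex.exp_eq_one_iff] at h
      obtain ⟨n, hn⟩ := h
      have : (θ:ℂ) = (n:ℂ) * (2 * Real.pi) := by
        rw [show (n:ℂ) * (2 * (Real.pi:ℂ) * Complex.I) = ((n:ℂ) * (2 * (Real.pi:ℂ))) * Complex.I from by ring] at hn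
        have := mul_right_cancel₀ Complex.I_ne_zero hn
        push_cast
        linear_combination this
      have hθr : θ = n * (2 * Real.pi) := by exact_mod_cast this
      apply hdvd
      refine ⟨n, ?_⟩
      have : (m:ℝ) = 2 * (M:ℝ) * (n:ℝ) := by
        rw [hθ] at hθr
        field_simp at hθr
        have h2 : Real.pi * (m:ℝ) = Real.pi * (2 * (M:ℝ) * (n:ℝ)) := by rw [hθr]; ring
        exact mul_left_cancel₀ hpi h2
      exact_mod_cast this
    have hre : ∀ j ∈ Finset.range M,
        Real.cos (Real.pi * (j:ℝ) * (m:ℝ) / (M:ℝ)) = (z ^ j).re := by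
      intro j _
      rw [hzdef, ← Complex.exp_nat_mul]
      have : (j:ℂ) * (θ * Complex.I) = (((j:ℝ) * θ : ℝ) : ℂ) * Complex.I := by push_cast; ring
      rw [this, Complex.exp_ofReal_mul_I_re]
      congr 1
      rw [hθ]; field_simp
    rw [Finset.sum_congr rfl hre, ← Complex.re_sum, geom_sum_eq hz]
    have hzM : z ^ M = Complex.exp ((m:ℂ) * (Real.pi * Complex.I)) := by
      rw [hzdef, ← Complex.exp_nat_mul]
      congr 1
      have hMC : (M:ℂ) ≠ 0 := Nat.cast_ne_zero.mpr (by omega)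
      rw [hθ]; push_cast; field_simp
    by_cases hodd : Odd m
    · rw [if_pos hodd]
      obtain ⟨t, ht⟩ := hodd
      have hzM' : z ^ M = -1 := by
        rw [hzM, ht]
        push_cast
        rw [show ((2*(t:ℂ)+1)) * (Real.pi * Complex.I) = (t:ℂ) * (2 * Real.pi * Complex.I) + Real.pi * Complex.I from by ring,
          Complex.exp_add, Complex.exp_int_mul, Complex.exp_two_pi_mul_I, one_zpow, one_mul,
          Complex.exp_pi_mul_I]
      rw [hzM']
      have hc : z.re = Real.cos θ := Complex.exp_ofReal_mul_I_re θ
      have hs : z.im = Real.sin θ := Complex.exp_ofReal_mul_I_im θ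
      have hcos1 : Real.cos θ ≠ 1 := by
        intro h
        apply hz
        have hsin : Real.sin θ = 0 := by nlinarith [Real.sin_sq_add_cos_sq θ]
        apply Complex.ext <;> simp [hc, hs, h, hsin]
      have hns : Complex.normSq (z - 1) = 2 - 2 * Real.cos θ := by
        rw [Complex.normSq_apply]
        simp only [Complex.sub_re, Complex.sub_im, Complex.one_re, Complex.one_im, hc, hs]
        nlinarith [Real.sin_sq_add_cos_sq θ]
      rw [div_eq_mul_inv, Complex.mul_re, Complex.inv_re, Complex.inv_im, hns]
      simp only [Complex.sub_re, Complex.sub_im, Complex.one_re, Complex.one_im, hc, hs,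
        Complex.neg_re, Complex.neg_im, Complex.re_ofNat, Complex.im_ofNat]
      have h2 : (2:ℝ) - 2 * Real.cos θ ≠ 0 := by
        intro h; apply hcos1; linarith
      field_simp
      ring
    · rw [if_neg hodd]
      have heven : Even m := Int.not_odd_iff_even.mp hodd
      obtain ⟨t, ht⟩ := heven
      have hzM' : z ^ M = 1 := by
        rw [hzM, ht]
        push_cast
        rw [show ((t:ℂ)+(t:ℂ)) * (Real.pi * Complex.I) = (t:ℂ) * (2 * Real.pi * Complex.I) from by ring,
          Complex.exp_int_mul, Complex.exp_two_pi_mul_I, one_zpow]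
      rw [hzM']
      simp


private lemma L_odd (M : ℕ) (hM : 1 ≤ M) (m : ℤ) (hm : Odd m) :
    ∑ j ∈ Finset.range M, Real.cos (Real.pi * (j:ℝ) * (m:ℝ) / (M:ℝ)) = 1 := by
  rw [cos_geom_sum M hM m, if_neg, if_pos hm]
  intro hdvd
  have h2 : (2:ℤ) ∣ m := (dvd_mul_right 2 (M:ℤ)).trans hdvd
  obtain ⟨c, hc⟩ := h2
  obtain ⟨t, ht⟩ := hm
  omega

private lemma L_even (M : ℕ) (hM : 1 ≤ M) (m' : ℤ) :
    ∑ j ∈ Finset.range M, Real.cos (Real.pi * (j:ℝ) * (((2 * m' : ℤ)):ℝ) / (M:ℝ)) =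
      if (M:ℤ) ∣ m' then (M:ℝ) else 0 := by
  rw [cos_geom_sum M hM]
  by_cases h : (M:ℤ) ∣ m'
  · rw [if_pos (mul_dvd_mul_left 2 h), if_pos h]
  · rw [if_neg, if_neg, if_neg h]
    · exact Int.not_odd_iff_even.mpr ⟨m', two_mul m'⟩
    · intro hdvd
      exact h ((mul_dvd_mul_iff_left (two_ne_zero)).mp hdvd)



/-- for the unadjusted cosine polynomial `f̃_M` of an even `2b`-periodic
function, the value at every even-indexed node is shifted from the data by the mean of
the odd-indexed data: `ỹ_{2k} − y_{2k} = (1/M)·∑_{j<M} y_{2j+1}`. -/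
theorem unadjusted_interpolant_even_node_shift
    (b : ℝ) (hb : 0 < b) (M : ℕ) (hM : 1 ≤ M)
    (f : ℝ → ℝ)
    (hper : ∀ t, f (t + 2 * b) = f t)
    (heven : ∀ t, f (-t) = f t)
    (x : ℕ → ℝ) (hx : ∀ j, x j = -b + (j : ℝ) * (2 * b / (2 * (M : ℝ))))
    (y : ℕ → ℝ) (hy : ∀ j, y j = f (x j))
    (A : ℕ → ℝ)
    (hA0 : A 0 = (2 / (2 * (M : ℝ))) * ∑ k ∈ Finset.range (2 * M), y k)
    (hA : ∀ j, 1 ≤ j → j < M →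
      A j = (2 / (2 * (M : ℝ))) * ∑ k ∈ Finset.range (2 * M),
        (-1 : ℝ) ^ j * y k * Real.cos (2 * Real.pi * (j : ℝ) * (k : ℝ) / (2 * (M : ℝ))))
    (ftilde : ℝ → ℝ)
    (hft : ∀ t, ftilde t = ∑ j ∈ Finset.range M, A j * Real.cos ((j : ℝ) * Real.pi * t / b))
    (ytilde : ℕ → ℝ) (hyt : ∀ l, ytilde l = ftilde (x l)) :
    ∀ k, k < M →
      ytilde (2 * k) - y (2 * k) = (1 / (M : ℝ)) * ∑ j ∈ Finset.range M, y (2 * j + 1) := by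
  intro k hk
  have hMR : (M:ℝ) ≠ 0 := Nat.cast_ne_zero.mpr (by omega)
  have hbne : b ≠ 0 := ne_of_gt hb
  have hpi := Real.pi_ne_zero
  -- symmetry of data from evenness
  have hysym : ∀ n : ℕ, n ≤ 2*M → y (2*M - n) = y n := by
    intro n hn
    rw [hy, hy, hx, hx]
    have hcast : ((2*M - n : ℕ) : ℝ) = 2*(M:ℝ) - (n:ℝ) := by
      rw [Nat.cast_sub hn]; push_cast; ring
    rw [hcast]
    have h1 : -b + (2*(M:ℝ) - (n:ℝ)) * (2*b/(2*(M:ℝ))) = -(-b + (n:ℝ) * (2*b/(2*(M:ℝ)))) := by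
      field_simp
      ring
    rw [h1, heven]
  -- cosine at an even node
  have hnode : ∀ j : ℕ, Real.cos ((j:ℝ) * Real.pi * x (2*k) / b) =
      (-1:ℝ)^j * Real.cos (Real.pi * (j:ℝ) * ((2*k:ℕ):ℝ) / (M:ℝ)) := by
    intro j
    rw [hx]
    have harg : (j:ℝ) * Real.pi * (-b + ((2*k:ℕ):ℝ) * (2*b/(2*(M:ℝ)))) / b
        = Real.pi * (j:ℝ) * ((2*k:ℕ):ℝ) / (M:ℝ) - (j:ℝ) * Real.pi := by
      push_cast
      field_simp
      ring
    rw [harg, Real.cos_sub, Real.sin_nat_mul_pi, cos_nat_mul_pi']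
    ring
  -- each term of the interpolant at the node
  have hterm : ∀ j ∈ Finset.range M,
      A j * Real.cos ((j:ℝ) * Real.pi * x (2*k) / b)
        = (1/(M:ℝ)) * ∑ k' ∈ Finset.range (2*M),
            y k' * (Real.cos (Real.pi * (j:ℝ) * (k':ℝ) / (M:ℝ)) *
              Real.cos (Real.pi * (j:ℝ) * ((2*k:ℕ):ℝ) / (M:ℝ))) := by
    intro j hj
    rw [Finset.mem_range] at hj
    rw [hnode j]
    rw [Finset.mul_sum]
    rcases Nat.eq_zero_or_pos j with h0 | h1
    · subst h0
      simp only [Nat.cast_zero, mul_zero, zero_mul, zero_div, Real.cos_zero, pow_zero,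
        one_mul, mul_one]
      rw [hA0, Finset.mul_sum]
      refine Finset.sum_congr rfl fun k' _ => ?_
      field_simp
    · rw [hA j h1 hj, Finset.mul_sum, Finset.sum_mul]
      refine Finset.sum_congr rfl fun k' _ => ?_
      have harg2 : 2 * Real.pi * (j:ℝ) * (k':ℝ) / (2*(M:ℝ)) = Real.pi * (j:ℝ) * (k':ℝ) / (M:ℝ) := by
        field_simp
      rw [harg2]
      have hsq : ((-1:ℝ)^j) * ((-1:ℝ)^j) = 1 := by
        rw [← pow_add, ← two_mul, pow_mul]; norm_num
      set c1 := Real.cos (Real.pi * (j:ℝ) * (k':ℝ) / (M:ℝ))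
      set c2 := Real.cos (Real.pi * (j:ℝ) * ((2*k:ℕ):ℝ) / (M:ℝ))
      rw [show (2/(2*(M:ℝ)) * ((-1:ℝ)^j * y k' * c1)) * ((-1:ℝ)^j * c2)
          = (((-1:ℝ)^j)*((-1:ℝ)^j)) * (2/(2*(M:ℝ)) * (y k' * (c1*c2))) from by ring, hsq, one_mul]
      congr 1
      field_simp
  -- rewrite the interpolated value
  rw [hyt, hft, Finset.sum_congr rfl hterm, ← Finset.mul_sum, Finset.sum_comm]
  -- product-to-sum inside
  have hinner : ∀ k' ∈ Finset.range (2*M),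
      (∑ j ∈ Finset.range M, y k' * (Real.cos (Real.pi * (j:ℝ) * (k':ℝ) / (M:ℝ)) *
          Real.cos (Real.pi * (j:ℝ) * ((2*k:ℕ):ℝ) / (M:ℝ))))
      = y k' * ((1/2) *
          ((∑ j ∈ Finset.range M, Real.cos (Real.pi * (j:ℝ) * ((((k':ℤ) + 2*(k:ℤ)):ℤ):ℝ) / (M:ℝ)))
          + (∑ j ∈ Finset.range M, Real.cos (Real.pi * (j:ℝ) * ((((k':ℤ) - 2*(k:ℤ)):ℤ):ℝ) / (M:ℝ))))) := by
    intro k' _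
    rw [← Finset.mul_sum]
    congr 1
    rw [← Finset.sum_add_distrib, Finset.mul_sum]
    refine Finset.sum_congr rfl fun j _ => ?_
    rw [cos_mul_cos']
    have e1 : Real.pi * (j:ℝ) * (k':ℝ) / (M:ℝ) + Real.pi * (j:ℝ) * ((2*k:ℕ):ℝ) / (M:ℝ)
        = Real.pi * (j:ℝ) * ((((k':ℤ) + 2*(k:ℤ)):ℤ):ℝ) / (M:ℝ) := by
      push_cast; ring
    have e2 : Real.pi * (j:ℝ) * (k':ℝ) / (M:ℝ) - Real.pi * (j:ℝ) * ((2*k:ℕ):ℝ) / (M:ℝ)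
        = Real.pi * (j:ℝ) * ((((k':ℤ) - 2*(k:ℤ)):ℤ):ℝ) / (M:ℝ) := by
      push_cast; ring
    rw [e1, e2]
    ring
  rw [Finset.sum_congr rfl hinner]
  rw [sum_range_even_odd M (fun k' => y k' * ((1/2) *
      ((∑ j ∈ Finset.range M, Real.cos (Real.pi * (j:ℝ) * ((((k':ℤ) + 2*(k:ℤ)):ℤ):ℝ) / (M:ℝ)))
      + (∑ j ∈ Finset.range M, Real.cos (Real.pi * (j:ℝ) * ((((k':ℤ) - 2*(k:ℤ)):ℤ):ℝ) / (M:ℝ))))))]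
  -- odd part
  have hodds : ∀ j' ∈ Finset.range M,
      y (2*j'+1) * ((1/2) *
        ((∑ j ∈ Finset.range M, Real.cos (Real.pi * (j:ℝ) * (((((2*j'+1:ℕ):ℤ) + 2*(k:ℤ)):ℤ):ℝ) / (M:ℝ)))
        + (∑ j ∈ Finset.range M, Real.cos (Real.pi * (j:ℝ) * (((((2*j'+1:ℕ):ℤ) - 2*(k:ℤ)):ℤ):ℝ) / (M:ℝ)))))
      = y (2*j'+1) := by
    intro j' _
    rw [L_odd M hM _ ⟨(j':ℤ)+(k:ℤ), by push_cast; ring⟩,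
        L_odd M hM _ ⟨(j':ℤ)-(k:ℤ), by push_cast; ring⟩]
    norm_num
  -- even part
  have hevens : ∀ j' ∈ Finset.range M,
      y (2*j') * ((1/2) *
        ((∑ j ∈ Finset.range M, Real.cos (Real.pi * (j:ℝ) * (((((2*j':ℕ):ℤ) + 2*(k:ℤ)):ℤ):ℝ) / (M:ℝ)))
        + (∑ j ∈ Finset.range M, Real.cos (Real.pi * (j:ℝ) * (((((2*j':ℕ):ℤ) - 2*(k:ℤ)):ℤ):ℝ) / (M:ℝ)))))
      = (1/2) * (y (2*j') * (if (M:ℤ) ∣ ((j':ℤ)+(k:ℤ)) then (M:ℝ) else 0)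
          + y (2*j') * (if (M:ℤ) ∣ ((j':ℤ)-(k:ℤ)) then (M:ℝ) else 0)) := by
    intro j' _
    rw [show (((2*j':ℕ):ℤ) + 2*(k:ℤ)) = 2 * ((j':ℤ)+(k:ℤ)) from by push_cast; ring,
        show (((2*j':ℕ):ℤ) - 2*(k:ℤ)) = 2 * ((j':ℤ)-(k:ℤ)) from by push_cast; ring,
        L_even M hM ((j':ℤ)+(k:ℤ)), L_even M hM ((j':ℤ)-(k:ℤ))]
    ring
  rw [Finset.sum_congr rfl hevens, Finset.sum_congr rfl hodds]
  -- evaluate the two indicator sums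
  have hsum2 : ∑ j' ∈ Finset.range M,
      y (2*j') * (if (M:ℤ) ∣ ((j':ℤ)-(k:ℤ)) then (M:ℝ) else 0) = y (2*k) * (M:ℝ) := by
    rw [Finset.sum_eq_single k]
    · simp
    · intro j' hj' hne
      rw [Finset.mem_range] at hj'
      rw [if_neg, mul_zero]
      intro hdvd
      have habs : |(j':ℤ) - (k:ℤ)| < (M:ℤ) := abs_sub_lt_iff.mpr ⟨by omega, by omega⟩
      have := Int.eq_zero_of_abs_lt_dvd hdvd habs
      omega
    · intro h
      exact absurd (Finset.mem_range.mpr hk) h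
  have hsum1 : ∑ j' ∈ Finset.range M,
      y (2*j') * (if (M:ℤ) ∣ ((j':ℤ)+(k:ℤ)) then (M:ℝ) else 0) = y (2*k) * (M:ℝ) := by
    have hnatdvd : ∀ j' : ℕ, ((M:ℤ) ∣ ((j':ℤ)+(k:ℤ))) ↔ M ∣ (j' + k) := by
      intro j'
      rw [show (j':ℤ)+(k:ℤ) = ((j'+k:ℕ):ℤ) from by push_cast; ring]
      exact Int.natCast_dvd_natCast
    by_cases hk0 : k = 0
    · subst hk0
      rw [Finset.sum_eq_single 0]
      · rw [if_pos (by simp)]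
      · intro j' hj' hne
        rw [Finset.mem_range] at hj'
        rw [if_neg, mul_zero]
        rw [hnatdvd]
        intro hdvd
        obtain ⟨t, ht⟩ := hdvd
        rcases t with _ | t
        · omega
        · have h2 : M * (t+1) = M * t + M := by ring
          omega
      · intro h
        exact absurd (Finset.mem_range.mpr (by omega)) h
    · rw [Finset.sum_eq_single (M-k)]
      · rw [if_pos, show 2*(M-k) = 2*M - 2*k from by omega, hysym (2*k) (by omega)]
        rw [hnatdvd]
        exact ⟨1, by omega⟩
      · intro j' hj' hne
        rw [Finset.mem_range] at hj'
        rw [if_neg, mul_zero]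
        rw [hnatdvd]
        intro hdvd
        obtain ⟨t, ht⟩ := hdvd
        have ht2 : t < 2 := by
          by_contra hge
          have h2 : M * 2 ≤ M * t := Nat.mul_le_mul_left M (by omega)
          omega
        interval_cases t
        · omega
        · omega
      · intro h
        exact absurd (Finset.mem_range.mpr (by omega)) h
  have hsplit : ∑ x ∈ Finset.range M,
      (1:ℝ) / 2 * ((y (2 * x) * if (M:ℤ) ∣ (x:ℤ) + (k:ℤ) then (M:ℝ) else 0)
        + y (2 * x) * if (M:ℤ) ∣ (x:ℤ) - (k:ℤ) then (M:ℝ) else 0)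
      = (1:ℝ)/2 * ((∑ x ∈ Finset.range M, y (2 * x) * if (M:ℤ) ∣ (x:ℤ) + (k:ℤ) then (M:ℝ) else 0)
        + ∑ x ∈ Finset.range M, y (2 * x) * if (M:ℤ) ∣ (x:ℤ) - (k:ℤ) then (M:ℝ) else 0) := by
    rw [← Finset.sum_add_distrib, Finset.mul_sum]
  rw [hsplit, hsum1, hsum2]
  field_simp
  ring
end

section
/- Let b>0, M≥1 be an integer, N=2M, x_j=-b+j(2b/N) for 0≤j<N, let f:ℝ→ℝ be an even 2b-periodic function and y_j=f(x_j). Define Ã_0=(2/N)·∑_{k=0}^{N-1} y_k, Ã_j=(2/N)·∑_{k=0}^{N-1}(-1)^j y_k cos(2πjk/N) for 1≤j<M, f̃_M(x)=∑_{j=0}^{M-1} Ã_j cos(jπx/b), and ỹ_l=f̃_M(x_l). Then for every 0≤k<M: ỹ_{2k+1} − y_{2k+1} = (1/M)·∑_{j=0}^{M-1} y_{2j}. -/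
open Complex in
lemma sumS (M : ℕ) (hM : 0 < M) (m : ℤ) :
    ∑ j ∈ Finset.range M, Real.cos (Real.pi * m * j / M) =
      if (2 * (M:ℤ)) ∣ m then (M:ℝ) else if (2:ℤ) ∣ m then 0 else 1 := by
  have hMR : (M:ℝ) ≠ 0 := Nat.cast_ne_zero.mpr hM.ne'
  have hMC : (M:ℂ) ≠ 0 := Nat.cast_ne_zero.mpr hM.ne'
  set θ : ℝ := Real.pi * m / M with hθ
  set z : ℂ := Complex.exp (θ * I) with hzdef
  have hzj : ∀ j : ℕ, Real.cos (Real.pi * m * j / M) = (z ^ j).re := by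
    intro j
    rw [hzdef, ← Complex.exp_nat_mul]
    have : (j : ℂ) * (↑θ * I) = (↑(θ * j) : ℂ) * I := by push_cast; ring
    rw [this, Complex.exp_ofReal_mul_I_re]
    congr 1; rw [hθ]; ring
  have hsum : ∑ j ∈ Finset.range M, Real.cos (Real.pi * m * j / M)
      = (∑ j ∈ Finset.range M, z ^ j).re := by
    rw [Complex.re_sum]; exact Finset.sum_congr rfl fun j _ => hzj j
  have hz1 : z = 1 ↔ (2 * (M:ℤ)) ∣ m := by
    rw [hzdef, Complex.exp_eq_one_iff]
    constructor
    · rintro ⟨n, hn⟩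
      refine ⟨n, ?_⟩
      have hn' : (θ:ℂ) * I = ((n * (2*Real.pi) : ℝ) : ℂ) * I := by
        rw [hn]; push_cast; ring
      have hθeq : θ = n * (2*Real.pi) := by
        have h := mul_right_cancel₀ Complex.I_ne_zero hn'
        exact_mod_cast h
      rw [hθ] at hθeq
      have : (m : ℝ) = 2 * M * n := by
        field_simp at hθeq
        nlinarith [Real.pi_pos, hθeq]
      exact_mod_cast this
    · rintro ⟨n, hn⟩
      refine ⟨n, ?_⟩
      have : θ = n * (2 * Real.pi) := by
        rw [hθ, hn]; push_cast; field_simp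
      rw [this]; push_cast; ring
  have hzM : z ^ M = Complex.exp ((Real.pi * m : ℝ) * I) := by
    rw [hzdef, ← Complex.exp_nat_mul]
    congr 1
    rw [hθ]; push_cast
    field_simp
  by_cases h1 : (2 * (M:ℤ)) ∣ m
  · simp only [h1, if_true]
    rw [hsum]
    have : z = 1 := hz1.mpr h1
    simp [this]
  · simp only [h1, if_false]
    have hzne : z ≠ 1 := fun h => h1 (hz1.mp h)
    have hgeom : ∑ j ∈ Finset.range M, z ^ j = (z ^ M - 1) / (z - 1) :=
      geom_sum_eq hzne M
    by_cases h2 : (2:ℤ) ∣ m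
    · simp only [h2, if_true]
      obtain ⟨n, hn⟩ := h2
      have : z ^ M = 1 := by
        rw [hzM, hn]
        have : ((Real.pi * (2 * n : ℤ) : ℝ) : ℂ) * I = n * (2 * Real.pi * I) := by
          push_cast; ring
        rw [this, Complex.exp_int_mul_two_pi_mul_I]
      rw [hsum, hgeom, this]
      simp
    · simp only [h2, if_false]
      obtain ⟨n, hn⟩ : ∃ n : ℤ, m = 2 * n + 1 := ⟨(m-1)/2, by omega⟩
      have hzMneg : z ^ M = -1 := by
        rw [hzM, hn]
        have : ((Real.pi * (2 * n + 1 : ℤ) : ℝ) : ℂ) * I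
            = n * (2 * Real.pi * I) + Real.pi * I := by push_cast; ring
        rw [this, Complex.exp_add, Complex.exp_int_mul_two_pi_mul_I,
          Complex.exp_pi_mul_I, one_mul]
      rw [hsum, hgeom, hzMneg]
      set w : ℂ := (-1 - 1) / (z - 1) with hw
      have hz0 : z ≠ 0 := Complex.exp_ne_zero _
      have hconjz : (starRingEnd ℂ) z = z⁻¹ := by
        rw [hzdef, ← Complex.exp_conj, ← Complex.exp_neg]
        congr 1
        simp [Complex.conj_ofReal]
      have hkey : w + (starRingEnd ℂ) w = 2 := by
        rw [hw, map_div₀, map_sub, map_sub, map_neg, map_one, hconjz]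
        have h1' : z - 1 ≠ 0 := sub_ne_zero.mpr hzne
        have h2' : z⁻¹ - 1 ≠ 0 := by
          intro h
          apply hzne
          have : z⁻¹ = 1 := by linear_combination h
          field_simp at this
          exact this.symm
        have h3' : (1:ℂ) - z ≠ 0 := sub_ne_zero.mpr (Ne.symm hzne)
        field_simp
        ring_nf
      have hre := Complex.add_conj w
      rw [hkey] at hre
      have h2re : (2 : ℝ) * w.re = 2 := by exact_mod_cast hre.symm
      linarith
lemma sum_even_odd (M : ℕ) (g : ℕ → ℝ) :
    ∑ i ∈ Finset.range (2*M), g i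
      = ∑ j ∈ Finset.range M, g (2*j) + ∑ j ∈ Finset.range M, g (2*j+1) := by
  induction M with
  | zero => simp
  | succ n ih =>
      rw [show 2*(n+1) = 2*n+1+1 from rfl, Finset.sum_range_succ, Finset.sum_range_succ,
        Finset.sum_range_succ (fun j => g (2*j)), Finset.sum_range_succ (fun j => g (2*j+1)), ih]
      ring


/-- for the unadjusted cosine polynomial `f̃_M` of an even `2b`-periodic
function, the value at every odd-indexed node is shifted from the data by the mean of
the even-indexed data: `ỹ_{2k+1} − y_{2k+1} = (1/M)·∑_{j<M} y_{2j}`. -/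
theorem unadjusted_interpolant_odd_node_shift
    (b : ℝ) (hb : 0 < b) (M : ℕ) (hM : 1 ≤ M)
    (f : ℝ → ℝ)
    (hper : ∀ t, f (t + 2 * b) = f t)
    (heven : ∀ t, f (-t) = f t)
    (x : ℕ → ℝ) (hx : ∀ j, x j = -b + (j : ℝ) * (2 * b / (2 * (M : ℝ))))
    (y : ℕ → ℝ) (hy : ∀ j, y j = f (x j))
    (A : ℕ → ℝ)
    (hA0 : A 0 = (2 / (2 * (M : ℝ))) * ∑ k ∈ Finset.range (2 * M), y k)
    (hA : ∀ j, 1 ≤ j → j < M →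
      A j = (2 / (2 * (M : ℝ))) * ∑ k ∈ Finset.range (2 * M),
        (-1 : ℝ) ^ j * y k * Real.cos (2 * Real.pi * (j : ℝ) * (k : ℝ) / (2 * (M : ℝ))))
    (ftilde : ℝ → ℝ)
    (hft : ∀ t, ftilde t = ∑ j ∈ Finset.range M, A j * Real.cos ((j : ℝ) * Real.pi * t / b))
    (ytilde : ℕ → ℝ) (hyt : ∀ l, ytilde l = ftilde (x l)) :
    ∀ k, k < M →
      ytilde (2 * k + 1) - y (2 * k + 1) = (1 / (M : ℝ)) * ∑ j ∈ Finset.range M, y (2 * j) := by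
  intro k hk
  have hMpos : 0 < M := hM
  have hMR : (M:ℝ) ≠ 0 := Nat.cast_ne_zero.mpr hMpos.ne'
  have hbne : b ≠ 0 := hb.ne'
  set l : ℕ := 2*k+1 with hl
  -- simplified node formula
  have hxl : ∀ j : ℕ, x j = -b + (j:ℝ) * (b/M) := by
    intro j
    rw [hx]
    congr 1
    rw [mul_div_mul_left b (M:ℝ) two_ne_zero]
  -- cosine at the node
  have hcosnode : ∀ j : ℕ,
      Real.cos ((j:ℝ) * Real.pi * x l / b) = (-1:ℝ)^j * Real.cos (Real.pi * j * l / M) := by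
    intro j
    have hxb : (j:ℝ) * Real.pi * x l / b = -((j:ℝ)*Real.pi - Real.pi*j*l/M) := by
      rw [hxl]; field_simp; ring
    rw [hxb, Real.cos_neg, Real.cos_nat_mul_pi_sub]
  -- squared sign
  have hsq : ∀ j : ℕ, ((-1:ℝ)^j) * ((-1:ℝ)^j) = 1 := by
    intro j
    rw [← pow_add]
    exact Even.neg_one_pow ⟨j, rfl⟩
  -- each term of the interpolant
  have hterm : ∀ j ∈ Finset.range M, A j * Real.cos ((j:ℝ) * Real.pi * x l / b)
      = (1/(M:ℝ)) * ∑ i ∈ Finset.range (2*M),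
          y i * (Real.cos (Real.pi*j*i/M) * Real.cos (Real.pi*j*l/M)) := by
    intro j hj
    have hj' := Finset.mem_range.mp hj
    rcases Nat.eq_zero_or_pos j with rfl | hj1
    · simp only [Nat.cast_zero, zero_mul, mul_zero, zero_div, zero_mul, Real.cos_zero,
        mul_one, one_mul]
      rw [hA0, Finset.mul_sum, Finset.mul_sum]
      refine Finset.sum_congr rfl fun i _ => ?_
      field_simp
    · rw [hA j hj1 hj', hcosnode j]
      rw [Finset.mul_sum, Finset.sum_mul, Finset.mul_sum]
      refine Finset.sum_congr rfl fun i _ => ?_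
      have hargs : 2 * Real.pi * (j:ℝ) * i / (2*(M:ℝ)) = Real.pi*j*i/M := by
        rw [show 2 * Real.pi * (j:ℝ) * i = 2 * (Real.pi * j * i) by ring,
          mul_div_mul_left _ _ two_ne_zero]
      rw [hargs]
      have h2M : 2/(2*(M:ℝ)) = 1/M := by
        rw [show (2*(M:ℝ)) = 2*M by ring, ← div_div]
        norm_num
      rw [h2M]
      linear_combination (1/(M:ℝ)) * y i * Real.cos (Real.pi*j*i/M) * Real.cos (Real.pi*j*l/M) * hsq j
  -- swap sums
  have hyl : ytilde l = (1/(M:ℝ)) * ∑ i ∈ Finset.range (2*M),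
      y i * (∑ j ∈ Finset.range M, Real.cos (Real.pi*j*i/M) * Real.cos (Real.pi*j*l/M)) := by
    rw [hyt, hft, Finset.sum_congr rfl hterm, ← Finset.mul_sum, Finset.sum_comm]
    congr 1
    exact Finset.sum_congr rfl fun i _ => (Finset.mul_sum _ _ _).symm
  -- inner sum via orthogonality
  have hC : ∀ i : ℕ,
      ∑ j ∈ Finset.range M, Real.cos (Real.pi*j*i/M) * Real.cos (Real.pi*j*l/M)
        = (1/2) * ((if (2*(M:ℤ)) ∣ ((i:ℤ) - l) then (M:ℝ) else if (2:ℤ) ∣ ((i:ℤ)-l) then 0 else 1)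
                 + (if (2*(M:ℤ)) ∣ ((i:ℤ) + l) then (M:ℝ) else if (2:ℤ) ∣ ((i:ℤ)+l) then 0 else 1)) := by
    intro i
    have hstep : ∀ j ∈ Finset.range M,
        Real.cos (Real.pi*j*i/M) * Real.cos (Real.pi*j*l/M)
          = (Real.cos (Real.pi*(((i:ℤ)-l : ℤ):ℝ)*j/M) + Real.cos (Real.pi*(((i:ℤ)+l : ℤ):ℝ)*j/M))/2 := by
      intro j _
      rw [show Real.cos (Real.pi*(((i:ℤ)-l : ℤ):ℝ)*j/M)
            = Real.cos (Real.pi*j*i/M - Real.pi*j*l/M) by congr 1; push_cast; ring,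
        show Real.cos (Real.pi*(((i:ℤ)+l : ℤ):ℝ)*j/M)
            = Real.cos (Real.pi*j*i/M + Real.pi*j*l/M) by congr 1; push_cast; ring,
        Real.cos_sub, Real.cos_add]
      ring
    rw [Finset.sum_congr rfl hstep, ← Finset.sum_div, Finset.sum_add_distrib,
      sumS M hMpos ((i:ℤ)-l), sumS M hMpos ((i:ℤ)+l)]
    ring
  -- divisibility evaluations
  have heval_even : ∀ j ∈ Finset.range M,
      y (2*j) * (∑ jj ∈ Finset.range M, Real.cos (Real.pi*jj*(2*j : ℕ)/M) * Real.cos (Real.pi*jj*l/M))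
        = y (2*j) := by
    intro j _
    rw [hC (2*j)]
    have hodd1 : ¬ (2:ℤ) ∣ (((2*j : ℕ):ℤ) - l) := by push_cast [hl]; omega
    have hodd2 : ¬ (2:ℤ) ∣ (((2*j : ℕ):ℤ) + l) := by push_cast [hl]; omega
    have h2M1 : ¬ (2*(M:ℤ)) ∣ (((2*j : ℕ):ℤ) - l) := fun h => hodd1 (dvd_trans ⟨M, rfl⟩ h)
    have h2M2 : ¬ (2*(M:ℤ)) ∣ (((2*j : ℕ):ℤ) + l) := fun h => hodd2 (dvd_trans ⟨M, rfl⟩ h)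
    rw [if_neg h2M1, if_neg hodd1, if_neg h2M2, if_neg hodd2]
    ring
  have heval_odd : ∀ j ∈ Finset.range M,
      y (2*j+1) * (∑ jj ∈ Finset.range M, Real.cos (Real.pi*jj*(2*j+1 : ℕ)/M) * Real.cos (Real.pi*jj*l/M))
        = y (2*j+1) * ((1/2) * ((if j = k then (M:ℝ) else 0) + (if j = M-1-k then (M:ℝ) else 0))) := by
    intro j hj
    have hjM := Finset.mem_range.mp hj
    have hjZ : (j:ℤ) < M := by exact_mod_cast hjM
    have hkZ : (k:ℤ) < M := by exact_mod_cast hk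
    have hMZ : 1 ≤ (M:ℤ) := by exact_mod_cast hM
    rw [hC (2*j+1)]
    have e1 : (if (2*(M:ℤ)) ∣ (((2*j+1 : ℕ):ℤ) - l) then (M:ℝ)
          else if (2:ℤ) ∣ (((2*j+1 : ℕ):ℤ) - l) then 0 else 1)
        = (if j = k then (M:ℝ) else 0) := by
      by_cases hjk : j = k
      · have hz : ((2*j+1 : ℕ):ℤ) - (l:ℤ) = 0 := by push_cast [hl]; omega
        rw [hz]
        simp [hjk]
      · have hnd : ¬ (2*(M:ℤ)) ∣ (((2*j+1 : ℕ):ℤ) - l) := by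
          intro hdvd
          have hz := Int.eq_zero_of_dvd_of_natAbs_lt_natAbs hdvd (by push_cast [hl]; omega)
          push_cast [hl] at hz
          exact hjk (by omega)
        rw [if_neg hnd, if_pos (by push_cast [hl]; omega : (2:ℤ) ∣ (((2*j+1 : ℕ):ℤ) - l)),
          if_neg hjk]
    have e2 : (if (2*(M:ℤ)) ∣ (((2*j+1 : ℕ):ℤ) + l) then (M:ℝ)
          else if (2:ℤ) ∣ (((2*j+1 : ℕ):ℤ) + l) then 0 else 1)
        = (if j = M-1-k then (M:ℝ) else 0) := by
      by_cases hjk : j = M-1-k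
      · have hdvd : (2*(M:ℤ)) ∣ (((2*j+1 : ℕ):ℤ) + l) := ⟨1, by push_cast [hl]; omega⟩
        rw [if_pos hdvd, if_pos hjk]
      · have hnd : ¬ (2*(M:ℤ)) ∣ (((2*j+1 : ℕ):ℤ) + l) := by
          intro hdvd
          obtain ⟨c, hc⟩ := hdvd
          push_cast [hl] at hc
          have hcle : c ≤ 1 := by nlinarith
          have hcge : 1 ≤ c := by nlinarith
          have hc1 : c = 1 := le_antisymm hcle hcge
          subst hc1
          exact hjk (by omega)
        rw [if_neg hnd, if_pos (by push_cast [hl]; omega : (2:ℤ) ∣ (((2*j+1 : ℕ):ℤ) + l)),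
          if_neg hjk]
    rw [e1, e2]
  -- reflection symmetry
  have hrefl : y (2*(M-1-k)+1) = y (2*k+1) := by
    have hidx : 2*(M-1-k)+1 = 2*M - (2*k+1) := by omega
    rw [hy, hy, hidx]
    have harg : x (2*M - (2*k+1)) = -(x (2*k+1)) := by
      rw [hxl, hxl]
      have hc : ((2*M - (2*k+1) : ℕ):ℝ) = 2*(M:ℝ) - (2*k+1) := by
        push_cast [Nat.cast_sub (by omega : 2*k+1 ≤ 2*M)]
        ring
      rw [hc]
      field_simp
      push_cast; ring
    rw [harg, heven]
  -- final assembly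
  rw [hyl, sum_even_odd M (fun i => y i * (∑ j ∈ Finset.range M,
      Real.cos (Real.pi*j*i/M) * Real.cos (Real.pi*j*l/M)))]
  rw [Finset.sum_congr rfl heval_even, Finset.sum_congr rfl heval_odd]
  have hsum_odd : ∑ j ∈ Finset.range M,
      y (2*j+1) * ((1/2) * ((if j = k then (M:ℝ) else 0) + (if j = M-1-k then (M:ℝ) else 0)))
        = (M:ℝ) * y (2*k+1) := by
    have hexp : ∀ j ∈ Finset.range M,
        y (2*j+1) * ((1/2) * ((if j = k then (M:ℝ) else 0) + (if j = M-1-k then (M:ℝ) else 0)))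
          = (if j = k then y (2*j+1) * ((M:ℝ)/2) else 0)
            + (if j = M-1-k then y (2*j+1) * ((M:ℝ)/2) else 0) := by
      intro j _
      split_ifs <;> ring
    rw [Finset.sum_congr rfl hexp, Finset.sum_add_distrib,
      Finset.sum_ite_eq' (Finset.range M) k (fun j => y (2*j+1) * ((M:ℝ)/2)),
      Finset.sum_ite_eq' (Finset.range M) (M-1-k) (fun j => y (2*j+1) * ((M:ℝ)/2)),
      if_pos (Finset.mem_range.mpr hk), if_pos (Finset.mem_range.mpr (by omega : M-1-k < M)),
      hrefl]
    ring
  rw [hsum_odd, hl]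
  field_simp
  ring
end

section
/- Let b>0 and K≥1 be an integer, and let f:ℝ→ℝ be a 2b-periodic function that is (K+1)-times differentiable with |f^{(K+1)}(x)|≤D_{K+1} for all x. Then there exists a constant C>0 (depending only on f, b and K) such that for every integer M≥1, with N=2M and x_j=-b+j(2b/N), the alternating node sum satisfies |(1/M)·∑_{j=0}^{N-1}(-1)^j f(x_j)| ≤ C / N^{K+1}. -/
private lemma shift_iteratedDeriv (h : ℝ) : ∀ (n : ℕ) (g : ℝ → ℝ),
    (∀ i, i < n → Differentiable ℝ (iteratedDeriv i g)) →
    iteratedDeriv n (fun x => g (x + h) - g x)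
      = fun x => iteratedDeriv n g (x + h) - iteratedDeriv n g x := by
  intro n
  induction n with
  | zero => intro g _; simp
  | succ n ih =>
      intro g hg
      have hgn : Differentiable ℝ (iteratedDeriv n g) := hg n (Nat.lt_succ_self n)
      rw [iteratedDeriv_succ, ih g (fun i hi => hg i (hi.trans (Nat.lt_succ_self n)))]
      funext x
      have hd1 : DifferentiableAt ℝ (fun y : ℝ => iteratedDeriv n g (y + h)) x :=
        (hgn (x + h)).comp x ((differentiableAt_id).add_const h)
      rw [deriv_fun_sub hd1 (hgn x), deriv_comp_add_const, ← iteratedDeriv_succ]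

private lemma mvt_bound (g : ℝ → ℝ) (hg : Differentiable ℝ g) (B : ℝ)
    (hB : ∀ t, |deriv g t| ≤ B) (x h : ℝ) (hh : 0 ≤ h) :
    |g (x + h) - g x| ≤ B * h := by
  have := convex_univ.norm_image_sub_le_of_norm_deriv_le
      (fun t _ => (hg t)) (fun t _ => hB t) (Set.mem_univ x) (Set.mem_univ (x + h))
  simpa [Real.norm_eq_abs, abs_of_nonneg hh] using this

private lemma delta_iter_bound (h : ℝ) (hh : 0 ≤ h) :
    ∀ (m : ℕ) (g : ℝ → ℝ), (∀ i, i < m → Differentiable ℝ (iteratedDeriv i g)) →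
    ∀ B : ℝ, (∀ t, |iteratedDeriv m g t| ≤ B) →
    ∀ x : ℝ, |(fun (G : ℝ → ℝ) => fun y => G (y + h) - G y)^[m] g x| ≤ B * h ^ m := by
  intro m
  induction m with
  | zero => intro g _ B hB x; simpa using hB x
  | succ m ih =>
      intro g hg B hB x
      rw [Function.iterate_succ_apply]
      have hcomm : ∀ i, i ≤ m → iteratedDeriv i (fun y => g (y + h) - g y)
          = fun t => iteratedDeriv i g (t + h) - iteratedDeriv i g t := by
        intro i hi
        exact shift_iteratedDeriv h i g
          (fun j hj => hg j (hj.trans (Nat.lt_succ_of_le hi)))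
      have hΔdiff : ∀ i, i < m → Differentiable ℝ (iteratedDeriv i (fun y => g (y + h) - g y)) := by
        intro i hi
        rw [hcomm i hi.le]
        have hgi := hg i (hi.trans (Nat.lt_succ_self m))
        exact (hgi.comp (differentiable_id.add_const h)).sub hgi
      have hΔbd : ∀ t, |iteratedDeriv m (fun y => g (y + h) - g y) t| ≤ B * h := by
        intro t
        rw [hcomm m le_rfl]
        have hgm : Differentiable ℝ (iteratedDeriv m g) := hg m (Nat.lt_succ_self m)
        have hd : ∀ s, |deriv (iteratedDeriv m g) s| ≤ B := by
          intro s; rw [← iteratedDeriv_succ]; exact hB s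
        exact mvt_bound _ hgm B hd t h hh
      calc |(fun (G : ℝ → ℝ) => fun y => G (y + h) - G y)^[m] (fun y => g (y + h) - g y) x|
          ≤ (B * h) * h ^ m := ih _ hΔdiff (B * h) hΔbd x
        _ = B * h ^ (m + 1) := by ring

private lemma alt_sum_step (g : ℝ → ℝ) (x0 h : ℝ) (M : ℕ)
    (hper : ∀ t, g (t + 2 * M * h) = g t) :
    ∑ j ∈ Finset.range (2 * M), (-1 : ℝ) ^ j * (g (x0 + j * h + h) - g (x0 + j * h))
      = -2 * ∑ j ∈ Finset.range (2 * M), (-1 : ℝ) ^ j * g (x0 + j * h) := by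
  have hkey : ∀ j : ℕ, (-1 : ℝ) ^ j * g (x0 + j * h + h)
      = -((-1 : ℝ) ^ (j + 1) * g (x0 + ((j : ℕ) + 1 : ℕ) * h)) := by
    intro j
    have harg : (x0 + (((j : ℕ) + 1 : ℕ) : ℝ) * h) = x0 + (j : ℝ) * h + h := by
      push_cast; ring
    rw [harg]; ring
  have hshift : ∑ j ∈ Finset.range (2 * M), (-1 : ℝ) ^ (j + 1) * g (x0 + ((j : ℕ) + 1 : ℕ) * h)
      = ∑ j ∈ Finset.range (2 * M), (-1 : ℝ) ^ j * g (x0 + j * h) := by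
    have h1 := Finset.sum_range_succ' (fun j : ℕ => (-1 : ℝ) ^ j * g (x0 + j * h)) (2 * M)
    have h2 := Finset.sum_range_succ (fun j : ℕ => (-1 : ℝ) ^ j * g (x0 + j * h)) (2 * M)
    have hN : ((-1 : ℝ)) ^ (2 * M) * g (x0 + ((2 * M : ℕ) : ℝ) * h)
        = (-1 : ℝ) ^ 0 * g (x0 + ((0 : ℕ) : ℝ) * h) := by
      have he : ((-1 : ℝ)) ^ (2 * M) = 1 := by
        rw [pow_mul]; norm_num
      have hp : g (x0 + ((2 * M : ℕ) : ℝ) * h) = g x0 := by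
        have := hper x0
        rw [show x0 + ((2 * M : ℕ) : ℝ) * h = x0 + 2 * (M : ℝ) * h by push_cast; ring]
        exact this
      rw [he, hp]; norm_num
    rw [h1] at h2
    have := h2
    simp only [Nat.cast_zero, zero_mul, add_zero, pow_zero, one_mul] at this hN ⊢
    linarith [hN]
  calc ∑ j ∈ Finset.range (2 * M), (-1 : ℝ) ^ j * (g (x0 + j * h + h) - g (x0 + j * h))
      = ∑ j ∈ Finset.range (2 * M), ((-1 : ℝ) ^ j * g (x0 + j * h + h)
          - (-1 : ℝ) ^ j * g (x0 + j * h)) := by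
        exact Finset.sum_congr rfl (fun j _ => by ring)
    _ = (∑ j ∈ Finset.range (2 * M), (-1 : ℝ) ^ j * g (x0 + j * h + h))
          - ∑ j ∈ Finset.range (2 * M), (-1 : ℝ) ^ j * g (x0 + j * h) :=
        Finset.sum_sub_distrib _ _
    _ = (∑ j ∈ Finset.range (2 * M), -((-1 : ℝ) ^ (j + 1) * g (x0 + ((j : ℕ) + 1 : ℕ) * h)))
          - ∑ j ∈ Finset.range (2 * M), (-1 : ℝ) ^ j * g (x0 + j * h) := by
        rw [Finset.sum_congr rfl (fun j _ => hkey j)]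
    _ = -2 * ∑ j ∈ Finset.range (2 * M), (-1 : ℝ) ^ j * g (x0 + j * h) := by
        rw [Finset.sum_neg_distrib, hshift]; ring

private lemma alt_sum_iter (h x0 : ℝ) (M : ℕ) :
    ∀ (m : ℕ) (g : ℝ → ℝ), (∀ t, g (t + 2 * M * h) = g t) →
    ∑ j ∈ Finset.range (2 * M),
        (-1 : ℝ) ^ j * ((fun (G : ℝ → ℝ) => fun y => G (y + h) - G y)^[m] g) (x0 + j * h)
      = (-2 : ℝ) ^ m * ∑ j ∈ Finset.range (2 * M), (-1 : ℝ) ^ j * g (x0 + j * h) := by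
  intro m
  induction m with
  | zero => intro g _; simp
  | succ m ih =>
      intro g hper
      have hΔper : ∀ t, (fun y => g (y + h) - g y) (t + 2 * M * h)
          = (fun y => g (y + h) - g y) t := by
        intro t
        simp only
        rw [show t + 2 * (M : ℝ) * h + h = t + h + 2 * (M : ℝ) * h by ring, hper (t + h), hper t]
      simp only [Function.iterate_succ_apply]
      rw [ih (fun y => g (y + h) - g y) hΔper]
      have hstep : ∑ j ∈ Finset.range (2 * M),
          (-1 : ℝ) ^ j * ((fun y => g (y + h) - g y) (x0 + j * h))
          = -2 * ∑ j ∈ Finset.range (2 * M), (-1 : ℝ) ^ j * g (x0 + j * h) := by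
        simpa using alt_sum_step g x0 h M hper
      rw [hstep]; ring


/-- the alternating node sum of a `2b`-periodic function with bounded
`(K+1)`-th derivative satisfies `|(1/M)·∑_{j<N} (-1)^j f(x_j)| ≤ C / N^(K+1)`,
where `N = 2M` and `x_j = -b + j(2b/N)`. -/
theorem alternating_node_sum_bound
    (b D : ℝ) (hb : 0 < b) (K : ℕ) (hK : 1 ≤ K)
    (f : ℝ → ℝ)
    (hper : ∀ t, f (t + 2 * b) = f t)
    (hdiff : ∀ i, i ≤ K → Differentiable ℝ (iteratedDeriv i f))
    (hbd : ∀ t, |iteratedDeriv (K + 1) f t| ≤ D) :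
    ∃ C > (0 : ℝ), ∀ M : ℕ, 1 ≤ M →
      |(1 / (M : ℝ)) * ∑ j ∈ Finset.range (2 * M),
          (-1 : ℝ) ^ j * f (-b + (j : ℝ) * (2 * b / (2 * (M : ℝ))))| ≤
        C / (2 * (M : ℝ)) ^ (K + 1) := by
  have hD0 : 0 ≤ D := le_trans (abs_nonneg _) (hbd 0)
  refine ⟨2 * D * b ^ (K + 1) + 1, by positivity, ?_⟩
  intro M hM
  have hMpos : (0 : ℝ) < (M : ℝ) := by exact_mod_cast hM
  set h : ℝ := 2 * b / (2 * (M : ℝ)) with hh_def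
  have hhpos : 0 < h := by
    rw [hh_def]; positivity
  have hNh : 2 * (M : ℝ) * h = 2 * b := by
    rw [hh_def]; field_simp
  have hperM : ∀ t, f (t + 2 * M * h) = f t := by
    intro t; rw [hNh]; exact hper t
  set S : ℝ := ∑ j ∈ Finset.range (2 * M), (-1 : ℝ) ^ j * f (-b + (j : ℝ) * h) with hS_def
  -- the identity
  have hiter := alt_sum_iter h (-b) M (K + 1) f hperM
  -- pointwise bound on iterated differences
  have hdiff' : ∀ i, i < K + 1 → Differentiable ℝ (iteratedDeriv i f) :=
    fun i hi => hdiff i (Nat.lt_succ_iff.mp hi)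
  have hbd' : ∀ x : ℝ,
      |((fun (G : ℝ → ℝ) => fun y => G (y + h) - G y)^[K + 1] f) x| ≤ D * h ^ (K + 1) :=
    delta_iter_bound h hhpos.le (K + 1) f hdiff' D hbd
  -- bound on the transformed sum
  have hsumbd : |∑ j ∈ Finset.range (2 * M),
      (-1 : ℝ) ^ j * ((fun (G : ℝ → ℝ) => fun y => G (y + h) - G y)^[K + 1] f) (-b + j * h)|
      ≤ (2 * M) * (D * h ^ (K + 1)) := by
    calc |∑ j ∈ Finset.range (2 * M),
        (-1 : ℝ) ^ j * ((fun (G : ℝ → ℝ) => fun y => G (y + h) - G y)^[K + 1] f) (-b + j * h)|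
        ≤ ∑ j ∈ Finset.range (2 * M),
            |(-1 : ℝ) ^ j * ((fun (G : ℝ → ℝ) => fun y => G (y + h) - G y)^[K + 1] f) (-b + j * h)| :=
          Finset.abs_sum_le_sum_abs _ _
      _ ≤ ∑ j ∈ Finset.range (2 * M), D * h ^ (K + 1) := by
          apply Finset.sum_le_sum
          intro j _
          rw [abs_mul, abs_pow, abs_neg, abs_one, one_pow, one_mul]
          exact hbd' _
      _ = (2 * M) * (D * h ^ (K + 1)) := by
          rw [Finset.sum_const, Finset.card_range]; push_cast; ring
  have habs2 : |(-2 : ℝ) ^ (K + 1) * S| = 2 ^ (K + 1) * |S| := by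
    rw [abs_mul, abs_pow, abs_neg]
    norm_num
  have hSbd : 2 ^ (K + 1) * |S| ≤ (2 * M) * (D * h ^ (K + 1)) := by
    rw [← habs2, ← hiter]
    exact hsumbd
  -- final arithmetic
  have hgoalS : |1 / (M : ℝ) * S| = |S| / M := by
    rw [abs_mul, abs_div, abs_one, abs_of_pos hMpos, div_mul_eq_mul_div, one_mul]
  rw [hgoalS]
  have h2pos : (0 : ℝ) < 2 ^ (K + 1) := by positivity
  have hSbd' : |S| ≤ (2 * M) * (D * h ^ (K + 1)) / 2 ^ (K + 1) := by
    rw [le_div_iff₀ h2pos]; linarith [hSbd]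
  calc |S| / M ≤ ((2 * M) * (D * h ^ (K + 1)) / 2 ^ (K + 1)) / M := by
        gcongr
    _ = 2 * D * b ^ (K + 1) / (2 * (M : ℝ)) ^ (K + 1) := by
        rw [hh_def]
        rw [div_pow]
        field_simp
        ring
    _ ≤ (2 * D * b ^ (K + 1) + 1) / (2 * (M : ℝ)) ^ (K + 1) := by
        have hden : (0:ℝ) < (2 * (M : ℝ)) ^ (K + 1) := by positivity
        exact (div_le_div_iff_of_pos_right hden).mpr (by linarith)
end

section
/- Let n≥1 and k be integers with 0<k<2n. Then ∑_{j=0}^{n-1} j·sin(2πjk/(2n)) = (−1)^{k+1}·(n/2)·cot(πk/(2n)). -/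
lemma weighted_sin_key (φ : ℝ) (m : ℕ) :
    (2 * Real.sin φ) ^ 2 * ∑ j ∈ Finset.range (m + 1), (j : ℝ) * Real.sin (2 * j * φ)
      = Real.sin (2 * m * φ) - (m : ℝ) * (2 * Real.sin φ) * Real.cos ((2 * m + 1) * φ) := by
  induction m with
  | zero => simp
  | succ m ih =>
    rw [Finset.sum_range_succ, mul_add, ih]
    push_cast
    have h1 : 2 * ((m : ℝ) + 1) * φ = 2 * m * φ + 2 * φ := by ring
    have h2 : (2 * ((m : ℝ) + 1) + 1) * φ = (2 * m + 1) * φ + 2 * φ := by ring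
    have h3 : (2 * (m : ℝ) + 1) * φ = 2 * m * φ + φ := by ring
    rw [h1, h2, h3]
    simp only [Real.sin_add, Real.cos_add, Real.sin_two_mul, Real.cos_two_mul']
    linear_combination (norm := ring_nf) (2*(m:ℝ)*Real.sin φ*Real.cos φ*Real.cos (2*m*φ)
      + 2*Real.sin φ*Real.cos φ*Real.cos (2*m*φ) - 2*(m:ℝ)*Real.sin φ^2*Real.sin (2*m*φ)
      - 2*Real.sin φ^2*Real.sin (2*m*φ) - Real.sin (2*m*φ)) * Real.sin_sq_add_cos_sq φ

/-- for integers `n ≥ 1` and `0 < k < 2n`,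
`∑_{j=0}^{n-1} j·sin(2πjk/(2n)) = (-1)^(k+1)·(n/2)·cot(πk/(2n))`. -/
theorem weighted_sin_sum_eval (n : ℕ) (hn : 1 ≤ n) (k : ℕ) (hk0 : 0 < k) (hk : k < 2 * n) :
    ∑ j ∈ Finset.range n, (j : ℝ) * Real.sin (2 * Real.pi * (j : ℝ) * (k : ℝ) / (2 * (n : ℝ)))
      = (-1 : ℝ) ^ (k + 1) * ((n : ℝ) / 2) * Real.cot (Real.pi * (k : ℝ) / (2 * (n : ℝ))) := by
  obtain ⟨m, rfl⟩ : ∃ m, n = m + 1 := ⟨n - 1, (Nat.succ_pred_eq_of_pos hn).symm⟩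
  have hn0 : (0 : ℝ) < (m : ℝ) + 1 := by positivity
  set φ : ℝ := Real.pi * k / (2 * ((m : ℕ) + 1 : ℕ) : ℝ) with hφ
  have hnn : ((m + 1 : ℕ) : ℝ) = (m : ℝ) + 1 := by push_cast; ring
  have hφpos : 0 < φ := by
    rw [hφ]
    push_cast
    positivity
  have hφlt : φ < Real.pi := by
    rw [hφ]
    push_cast
    rw [div_lt_iff₀ (by positivity)]
    have : (k : ℝ) < 2 * ((m : ℝ) + 1) := by exact_mod_cast hk
    nlinarith [Real.pi_pos]
  have hs : 0 < Real.sin φ := Real.sin_pos_of_pos_of_lt_pi hφpos hφlt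
  -- rewrite the summand
  have hsum : ∀ j ∈ Finset.range (m + 1),
      (j : ℝ) * Real.sin (2 * Real.pi * (j : ℝ) * (k : ℝ) / (2 * ((m + 1 : ℕ) : ℝ)))
        = (j : ℝ) * Real.sin (2 * j * φ) := by
    intro j _
    congr 1
    rw [hφ]
    push_cast
    field_simp
  rw [Finset.sum_congr rfl hsum]
  have key := weighted_sin_key φ m
  -- evaluate the closed form
  have ha : 2 * (m : ℝ) * φ = (k : ℝ) * Real.pi - 2 * φ := by
    rw [hφ]; push_cast; field_simp; ring
  have hb : (2 * (m : ℝ) + 1) * φ = (k : ℝ) * Real.pi - φ := by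
    rw [hφ]; push_cast; field_simp; ring
  rw [ha, hb, Real.sin_nat_mul_pi_sub, Real.cos_nat_mul_pi_sub, Real.sin_two_mul] at key
  rw [Real.cot_eq_cos_div_sin]
  have hs' : Real.sin φ ≠ 0 := ne_of_gt hs
  have h2s : (2 * Real.sin φ) ≠ 0 := by positivity
  have key2 : (2 * Real.sin φ) * ((2 * Real.sin φ) * ∑ j ∈ Finset.range (m + 1), (j : ℝ) * Real.sin (2 * j * φ))
      = (2 * Real.sin φ) * (-(-1 : ℝ) ^ k * Real.cos φ * ((m : ℝ) + 1)) := by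
    linear_combination key
  have key3 := mul_left_cancel₀ h2s key2
  have hk2 : ((-1 : ℝ)) ^ (k + 1) = -(-1 : ℝ) ^ k := by rw [pow_succ]; ring
  rw [hk2]
  push_cast
  set S := ∑ j ∈ Finset.range (m + 1), (j : ℝ) * Real.sin (2 * j * φ) with hS
  field_simp
  linear_combination key3
end

section
/- Let b>0, let f:ℝ→ℝ be a continuous 2b-periodic function, let M≥1 be an integer, N=2M, λ=2b/N, and x_m=-b+mλ (extended to all m∈ℤ). For an integer k≥1 define the k-th forward difference Δ^k_λ f(x)=∑_{j=0}^{k}(−1)^j C(k,j) f(x+(k−j)λ). Then for every integer l with 1≤l<N there exist ξ, θ ∈ [−b,b] such that ∑_{m=0}^{N-1} Δ^k_λ f(x_{m−k}) · cos(2πml/N) = N·Δ^k_λ f(ξ) and ∑_{m=0}^{N-1} Δ^k_λ f(x_{m−k}) · sin(2πml/N) = N·Δ^k_λ f(θ). -/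
open Finset

/-- Shifted sums of a periodic function over a full period agree. -/
lemma sum_shift_periodic (N : ℕ) (g : ℤ → ℝ) (hg : ∀ m : ℤ, g (m + N) = g m) (j : ℕ) :
    ∑ m ∈ Finset.range N, g ((m : ℤ) - j) = ∑ m ∈ Finset.range N, g (m : ℤ) := by
  induction j with
  | zero => simp
  | succ j ih =>
    rw [← ih]
    rcases Nat.eq_zero_or_pos N with h0 | hN
    · simp [h0]
    obtain ⟨n, rfl⟩ : ∃ n, N = n + 1 := ⟨N - 1, by omega⟩
    push_cast
    rw [Finset.sum_range_succ' (fun m => g ((m : ℤ) - ((j : ℤ) + 1))) n,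
      Finset.sum_range_succ (fun m => g ((m : ℤ) - (j : ℤ))) n]
    congr 1
    · apply Finset.sum_congr rfl; intro m _
      congr 1; push_cast; ring
    · rw [show ((0 : ℕ) : ℤ) - ((j : ℤ) + 1) = -(j : ℤ) - 1 by push_cast; ring,
        ← hg (-(j : ℤ) - 1)]
      congr 1; push_cast; ring

/-- Sums of cosines and sines of equispaced angles vanish. -/
lemma trig_sums_zero (N l : ℕ) (hl1 : 1 ≤ l) (hl2 : l < N) (d : ℝ) (hd : d = N) :
    (∑ m ∈ Finset.range N, Real.cos (2 * Real.pi * m * l / d) = 0) ∧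
    (∑ m ∈ Finset.range N, Real.sin (2 * Real.pi * m * l / d) = 0) := by
  have hN : 0 < N := by omega
  have hNR : (0 : ℝ) < (N : ℝ) := by exact_mod_cast hN
  set θ : ℝ := 2 * Real.pi * l / N with hθ
  set z : ℂ := Complex.exp (θ * Complex.I) with hz
  have hzN : z ^ N = 1 := by
    rw [hz, ← Complex.exp_nat_mul]
    have : (N : ℂ) * ((θ : ℝ) * Complex.I) = (l : ℤ) * (2 * Real.pi * Complex.I) := by
      have hNC : (N : ℂ) ≠ 0 := by exact_mod_cast hNR.ne'
      rw [hθ]; push_cast; field_simp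
    rw [this, Complex.exp_int_mul_two_pi_mul_I]
  have hpos : 0 < θ := by
    rw [hθ]
    have : (0:ℝ) < (l:ℝ) := by exact_mod_cast hl1
    positivity
  have hlt : θ < 2 * Real.pi :=  by
    rw [hθ]
    rw [div_lt_iff₀ hNR]
    have h1 : (l : ℝ) < (N : ℝ) := by exact_mod_cast hl2
    nlinarith [Real.pi_pos]
  have hz1 : z ≠ 1 := by
    intro h
    rw [hz, Complex.exp_eq_one_iff] at h
    obtain ⟨n, hn⟩ := h
    have hI : ((θ : ℂ)) = (n : ℂ) * (2 * Real.pi) := by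
      have hn' : (θ : ℂ) * Complex.I = ((n : ℂ) * (2 * Real.pi)) * Complex.I := by
        rw [hn]; ring
      exact mul_right_cancel₀ Complex.I_ne_zero hn'
    have hreal : θ = n * (2 * Real.pi) := by exact_mod_cast hI
    rcases le_or_gt n 0 with h | h
    · have : (n : ℝ) ≤ 0 := by exact_mod_cast h
      nlinarith [Real.pi_pos]
    · have : (1 : ℝ) ≤ (n : ℝ) := by exact_mod_cast h
      nlinarith [Real.pi_pos]
  have hgeom : ∑ m ∈ Finset.range N, z ^ m = 0 := by
    rw [geom_sum_eq hz1, hzN]; simp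
  have hzm : ∀ m : ℕ, z ^ m = Complex.exp (((m : ℝ) * θ : ℝ) * Complex.I) := by
    intro m
    rw [hz, ← Complex.exp_nat_mul]
    congr 1; push_cast; ring
  have harg : ∀ m : ℕ, (m : ℝ) * θ = 2 * Real.pi * m * l / d := by
    intro m; rw [hθ, hd]; ring
  constructor
  · have := congrArg Complex.re hgeom
    rw [Complex.re_sum] at this
    simp only [Complex.zero_re] at this
    rw [← this]
    apply Finset.sum_congr rfl; intro m _
    rw [hzm m, Complex.exp_ofReal_mul_I_re, harg m]
  · have := congrArg Complex.im hgeom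
    rw [Complex.im_sum] at this
    simp only [Complex.zero_im] at this
    rw [← this]
    apply Finset.sum_congr rfl; intro m _
    rw [hzm m, Complex.exp_ofReal_mul_I_im, harg m]

/-- Discrete mean value: if values come from a continuous function on `[-b,b]`,
the weights are `≥ -1` with zero sum, and the values have zero sum, then the weighted
sum is `N` times a value of the function. -/
lemma weighted_sum_mvt (b : ℝ) (hb : 0 < b) (Δ : ℝ → ℝ) (hΔc : Continuous Δ)
    (N : ℕ) (hN : 0 < N) (a w : ℕ → ℝ)
    (hmem : ∀ m ∈ Finset.range N, ∃ y ∈ Set.Icc (-b) b, a m = Δ y)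
    (hw : ∀ m ∈ Finset.range N, -1 ≤ w m)
    (hw0 : ∑ m ∈ Finset.range N, w m = 0)
    (ha0 : ∑ m ∈ Finset.range N, a m = 0) :
    ∃ ξ ∈ Set.Icc (-b) b, ∑ m ∈ Finset.range N, a m * w m = (N : ℝ) * Δ ξ := by
  have hne : (Set.Icc (-b) b).Nonempty := Set.nonempty_Icc.mpr (by linarith)
  obtain ⟨p, hp, hpmax⟩ := isCompact_Icc.exists_isMaxOn hne hΔc.continuousOn
  obtain ⟨q, hq, hqmin⟩ := isCompact_Icc.exists_isMinOn hne hΔc.continuousOn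
  set S := ∑ m ∈ Finset.range N, a m * w m with hS
  have hbounds : ∀ m ∈ Finset.range N, Δ q ≤ a m ∧ a m ≤ Δ p := by
    intro m hm
    obtain ⟨y, hy, hay⟩ := hmem m hm
    exact ⟨hay ▸ hqmin hy, hay ▸ hpmax hy⟩
  have hub : S ≤ (N : ℝ) * Δ p := by
    have e1 : S = ∑ m ∈ Finset.range N, (a m - Δ p) * w m := by
      simp [hS, sub_mul, Finset.sum_sub_distrib, ← Finset.mul_sum, hw0]
    have e2 : ∑ m ∈ Finset.range N, (a m - Δ p) * w m ≤
        ∑ m ∈ Finset.range N, (Δ p - a m) := by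
      apply Finset.sum_le_sum
      intro m hm
      have h1 := (hbounds m hm).2
      have h2 := hw m hm
      nlinarith
    have e3 : ∑ m ∈ Finset.range N, (Δ p - a m) = (N : ℝ) * Δ p := by
      rw [Finset.sum_sub_distrib, ha0, Finset.sum_const, Finset.card_range]
      ring
    linarith [e1 ▸ e2, e3]
  have hlb : (N : ℝ) * Δ q ≤ S := by
    have e1 : S = ∑ m ∈ Finset.range N, (a m - Δ q) * w m := by
      simp [hS, sub_mul, Finset.sum_sub_distrib, ← Finset.mul_sum, hw0]
    have e2 : ∑ m ∈ Finset.range N, (Δ q - a m) ≤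
        ∑ m ∈ Finset.range N, (a m - Δ q) * w m := by
      apply Finset.sum_le_sum
      intro m hm
      have h1 := (hbounds m hm).1
      have h2 := hw m hm
      nlinarith
    have e3 : ∑ m ∈ Finset.range N, (Δ q - a m) = (N : ℝ) * Δ q := by
      rw [Finset.sum_sub_distrib, ha0, Finset.sum_const, Finset.card_range]
      ring
    linarith [e1 ▸ e2, e3]
  have hNR : (0 : ℝ) < (N : ℝ) := by exact_mod_cast hN
  have hmem' : S / N ∈ Set.uIcc (Δ q) (Δ p) := by
    rw [Set.mem_uIcc]
    left
    constructor
    · rw [le_div_iff₀ hNR]; linarith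
    · rw [div_le_iff₀ hNR]; linarith
  obtain ⟨ξ, hξ, hΔξ⟩ := intermediate_value_uIcc (hΔc.continuousOn (s := Set.uIcc q p)) hmem'
  refine ⟨ξ, Set.uIcc_subset_Icc hq hp hξ, ?_⟩
  rw [hΔξ]
  field_simp

/-- discrete mean value form of the weighted sums of forward differences:
for a continuous `2b`-periodic `f` and `1 ≤ l < N` there exist `ξ, θ ∈ [-b, b]` with
`∑_{m<N} Δ^k_λ f(x_{m-k}) cos(2πml/N) = N·Δ^k_λ f(ξ)` and
`∑_{m<N} Δ^k_λ f(x_{m-k}) sin(2πml/N) = N·Δ^k_λ f(θ)`. -/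
theorem forward_difference_weighted_sum_mean_value
    (b : ℝ) (hb : 0 < b)
    (f : ℝ → ℝ) (hcont : Continuous f)
    (hper : ∀ t, f (t + 2 * b) = f t)
    (M : ℕ) (hM : 1 ≤ M) (k : ℕ) (hk : 1 ≤ k)
    (lam : ℝ) (hlam : lam = 2 * b / (2 * (M : ℝ)))
    (x : ℤ → ℝ) (hx : ∀ m : ℤ, x m = -b + (m : ℝ) * lam)
    (Δ : ℝ → ℝ)
    (hΔ : ∀ t, Δ t = ∑ j ∈ Finset.range (k + 1),
      (-1 : ℝ) ^ j * (k.choose j : ℝ) * f (t + ((k : ℝ) - (j : ℝ)) * lam)) :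
    ∀ l : ℕ, 1 ≤ l → l < 2 * M →
      ∃ ξ ∈ Set.Icc (-b) b, ∃ θ ∈ Set.Icc (-b) b,
        (∑ m ∈ Finset.range (2 * M),
            Δ (x ((m : ℤ) - (k : ℤ))) *
              Real.cos (2 * Real.pi * (m : ℝ) * (l : ℝ) / (2 * (M : ℝ)))
          = (2 * (M : ℝ)) * Δ ξ) ∧
        (∑ m ∈ Finset.range (2 * M),
            Δ (x ((m : ℤ) - (k : ℤ))) *
              Real.sin (2 * Real.pi * (m : ℝ) * (l : ℝ) / (2 * (M : ℝ)))
          = (2 * (M : ℝ)) * Δ θ) := by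
  intro l hl1 hl2
  have hMR : (1 : ℝ) ≤ (M : ℝ) := by exact_mod_cast hM
  have hNpos : 0 < 2 * M := by omega
  have hNR : (0 : ℝ) < 2 * (M : ℝ) := by linarith
  have hlam_pos : 0 < lam := by rw [hlam]; positivity
  have hNlam : 2 * (M : ℝ) * lam = 2 * b := by
    rw [hlam]; field_simp
  -- continuity of Δ
  have hΔc : Continuous Δ := by
    have hfun : Δ = fun t => ∑ j ∈ Finset.range (k + 1),
        (-1 : ℝ) ^ j * (k.choose j : ℝ) * f (t + ((k : ℝ) - (j : ℝ)) * lam) := funext hΔ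
    rw [hfun]
    apply continuous_finset_sum
    intro j _
    exact continuous_const.mul (hcont.comp (continuous_id.add continuous_const))
  -- periodicity of Δ
  have hΔper1 : Function.Periodic Δ (2 * b) := by
    intro t
    rw [hΔ, hΔ]
    apply Finset.sum_congr rfl
    intro j _
    congr 1
    rw [show t + 2 * b + ((k : ℝ) - (j : ℝ)) * lam
        = (t + ((k : ℝ) - (j : ℝ)) * lam) + 2 * b by ring, hper]
  have hΔper : ∀ (q : ℤ) (t : ℝ), Δ (t + q * (2 * b)) = Δ t :=
    fun q t => (hΔper1.int_mul q) t
  -- the grid function and zero sum of the differences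
  set g : ℤ → ℝ := fun m => f (-b + (m : ℝ) * lam) with hg
  have hgper : ∀ m : ℤ, g (m + (2 * M : ℕ)) = g m := by
    intro m
    simp only [hg]
    rw [show -b + ((m : ℤ) + ((2 * M : ℕ) : ℤ) : ℤ) * lam
        = (-b + (m : ℝ) * lam) + 2 * b by push_cast; linear_combination hNlam]
    exact hper _
  have key : ∀ m : ℕ, Δ (x ((m : ℤ) - (k : ℤ)))
      = ∑ j ∈ Finset.range (k + 1), (-1 : ℝ) ^ j * (k.choose j : ℝ) * g ((m : ℤ) - (j : ℤ)) := by
    intro m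
    rw [hΔ]
    apply Finset.sum_congr rfl
    intro j _
    congr 1
    rw [hx]
    simp only [hg]
    push_cast
    ring_nf
  have ha0 : ∑ m ∈ Finset.range (2 * M), Δ (x ((m : ℤ) - (k : ℤ))) = 0 := by
    calc ∑ m ∈ Finset.range (2 * M), Δ (x ((m : ℤ) - (k : ℤ)))
        = ∑ m ∈ Finset.range (2 * M), ∑ j ∈ Finset.range (k + 1),
            (-1 : ℝ) ^ j * (k.choose j : ℝ) * g ((m : ℤ) - (j : ℤ)) := by
          exact Finset.sum_congr rfl fun m _ => key m
      _ = ∑ j ∈ Finset.range (k + 1), ∑ m ∈ Finset.range (2 * M),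
            (-1 : ℝ) ^ j * (k.choose j : ℝ) * g ((m : ℤ) - (j : ℤ)) := Finset.sum_comm
      _ = ∑ j ∈ Finset.range (k + 1), (-1 : ℝ) ^ j * (k.choose j : ℝ) *
            ∑ m ∈ Finset.range (2 * M), g (m : ℤ) := by
          apply Finset.sum_congr rfl
          intro j _
          rw [← Finset.mul_sum, sum_shift_periodic (2 * M) g hgper j]
      _ = (∑ j ∈ Finset.range (k + 1), (-1 : ℝ) ^ j * (k.choose j : ℝ)) *
            ∑ m ∈ Finset.range (2 * M), g (m : ℤ) := by rw [Finset.sum_mul]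
      _ = 0 := by
          have h := Int.alternating_sum_range_choose_of_ne (n := k) (by omega)
          have h2 : ∑ j ∈ Finset.range (k + 1), (-1 : ℝ) ^ j * (k.choose j : ℝ) = 0 := by
            exact_mod_cast congrArg (Int.cast : ℤ → ℝ) h
          rw [h2, zero_mul]
  -- the values come from points in [-b, b]
  have hmem : ∀ m ∈ Finset.range (2 * M), ∃ y ∈ Set.Icc (-b) b,
      Δ (x ((m : ℤ) - (k : ℤ))) = Δ y := by
    intro m _
    set r : ℤ := ((m : ℤ) - (k : ℤ)) % (2 * M : ℤ) with hr
    have hNZ : (0 : ℤ) < (2 * M : ℤ) := by exact_mod_cast hNpos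
    have hr0 : 0 ≤ r := Int.emod_nonneg _ hNZ.ne'
    have hrN : r < 2 * M := Int.emod_lt_of_pos _ hNZ
    have hr0R : (0 : ℝ) ≤ (r : ℝ) := by exact_mod_cast hr0
    have hrNR : (r : ℝ) ≤ 2 * (M : ℝ) := by
      have : (r : ℝ) < 2 * (M : ℝ) := by exact_mod_cast hrN
      linarith
    refine ⟨-b + (r : ℝ) * lam, ⟨by nlinarith, by nlinarith⟩, ?_⟩
    set q : ℤ := ((m : ℤ) - (k : ℤ)) / (2 * M : ℤ) with hq
    have hdiv : (2 * M : ℤ) * q + r = (m : ℤ) - (k : ℤ) := Int.mul_ediv_add_emod _ _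
    have hdivR : 2 * (M : ℝ) * (q : ℝ) + (r : ℝ) = (m : ℝ) - (k : ℝ) := by
      exact_mod_cast congrArg (Int.cast : ℤ → ℝ) hdiv
    rw [hx]
    rw [show -b + (((m : ℤ) - (k : ℤ) : ℤ) : ℝ) * lam
        = (-b + (r : ℝ) * lam) + q * (2 * b) by
      push_cast
      nlinarith [hdivR, hNlam]]
    exact hΔper q _
  -- weight sums vanish
  have hd : (2 : ℝ) * (M : ℝ) = ((2 * M : ℕ) : ℝ) := by push_cast; ring
  have htrig := trig_sums_zero (2 * M) l hl1 hl2 (2 * (M : ℝ)) hd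
  -- apply the mean value lemma twice
  obtain ⟨ξ, hξ, hSξ⟩ := weighted_sum_mvt b hb Δ hΔc (2 * M) hNpos
    (fun m => Δ (x ((m : ℤ) - (k : ℤ))))
    (fun m => Real.cos (2 * Real.pi * (m : ℝ) * (l : ℝ) / (2 * (M : ℝ))))
    hmem (fun m _ => Real.neg_one_le_cos _) htrig.1 ha0
  obtain ⟨θ, hθ, hSθ⟩ := weighted_sum_mvt b hb Δ hΔc (2 * M) hNpos
    (fun m => Δ (x ((m : ℤ) - (k : ℤ))))
    (fun m => Real.sin (2 * Real.pi * (m : ℝ) * (l : ℝ) / (2 * (M : ℝ))))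
    hmem (fun m _ => Real.neg_one_le_sin _) htrig.2 ha0
  refine ⟨ξ, hξ, θ, hθ, ?_, ?_⟩
  · rw [hSξ, ← hd]
  · rw [hSθ, ← hd]
end

section
/- Let b>0 and K≥2 be an integer, and let f:ℝ→ℝ be an even 2b-periodic function that is (K+1)-times differentiable with |f^{(K+1)}(x)|≤D_{K+1} for all x. For an integer M≥1 let f_M and f_{2M} be the adjusted trigonometric interpolants of f built on N=2M and on 4M equispaced nodes respectively. Then for every integer k with 1≤k<K there exists a constant C>0 (depending only on f, b, K and k) such that sup_{x∈ℝ} |f_M^{(k)}(x) − f_{2M}^{(k)}(x)| ≤ C / N^{K−k} for every M≥1, where the superscript (k) denotes the k-th derivative. -/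
open Finset


lemma iterShift (F : ℝ → ℝ) (c : ℝ) : ∀ n, iteratedDeriv n (fun t => F (t - c)) = fun t => iteratedDeriv n F (t - c) := by
  intro n
  induction n with
  | zero => simp
  | succ n ih =>
    rw [iteratedDeriv_succ, ih, iteratedDeriv_succ]
    funext t
    exact deriv_comp_sub_const _ _ _

lemma iterSub (g : ℝ → ℝ) (c : ℝ) : ∀ n, (∀ i < n, Differentiable ℝ (iteratedDeriv i g)) →
    iteratedDeriv n (fun t => g t - g (t - c)) = fun t => iteratedDeriv n g t - iteratedDeriv n g (t - c) := by
  intro n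
  induction n with
  | zero => simp
  | succ n ih =>
    intro hd
    rw [iteratedDeriv_succ, ih (fun i hi => hd i (by omega)), iteratedDeriv_succ]
    funext t
    have h1 : Differentiable ℝ (iteratedDeriv n g) := hd n (by omega)
    have h2 : DifferentiableAt ℝ (fun t => iteratedDeriv n g (t - c)) t :=
      DifferentiableAt.comp t (h1 (t - c)) ((differentiable_id.sub_const c) t)
    rw [deriv_fun_sub (h1 t) h2]
    rw [deriv_comp_sub_const]

lemma mvt_bound_s18 (F : ℝ → ℝ) (hF : Differentiable ℝ F) (D : ℝ)
    (hD : ∀ t, |deriv F t| ≤ D) (s t : ℝ) : |F t - F s| ≤ D * |t - s| := by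
  have := Convex.norm_image_sub_le_of_norm_deriv_le (s := (Set.univ : Set ℝ))
    (fun x _ => hF x) (fun x _ => hD x) convex_univ (Set.mem_univ s) (Set.mem_univ t)
  simpa using this

lemma sum_range_add' (u : ℕ → ℝ) (m n : ℕ) :
    ∑ i ∈ range (m + n), u i = ∑ i ∈ range m, u i + ∑ i ∈ range n, u (m + i) := by
  induction n with
  | zero => simp
  | succ n ih => rw [← Nat.add_assoc, sum_range_succ, ih, sum_range_succ]; ring

lemma sum_pairs (B : ℕ → ℝ) (n : ℕ) :
    ∑ m ∈ range (2 * n), B m = ∑ k ∈ range n, (B (2 * k) + B (2 * k + 1)) := by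
  induction n with
  | zero => simp
  | succ n ih =>
    have : 2 * (n + 1) = 2 * n + 1 + 1 := by ring
    rw [this, sum_range_succ, sum_range_succ, ih, sum_range_succ, add_assoc]

lemma expsum (bb : ℝ) (hbb : 0 < bb) (N : ℕ) (hN : 0 < N) (ω : ℂ) (hω : ω ^ N = 1)
    (hω1 : ω ≠ 1) :
    ∀ (p : ℕ) (g : ℝ → ℝ) (D : ℝ), (∀ t, g (t + 2 * bb) = g t) →
      (∀ i < p, Differentiable ℝ (iteratedDeriv i g)) →
      (∀ t, |iteratedDeriv p g t| ≤ D) →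
      ‖∑ k ∈ range N, (g ((k : ℝ) * (2 * bb / N)) : ℂ) * ω ^ k‖ ≤
        N * D * (2 * bb / N) ^ p / ‖1 - ω‖ ^ p := by
  have hNR : (0 : ℝ) < N := by exact_mod_cast hN
  have hh : (0 : ℝ) < 2 * bb / N := by positivity
  have hωne : (1 : ℂ) - ω ≠ 0 := fun h => hω1 (by linear_combination -h)
  have hωpos : 0 < ‖(1 : ℂ) - ω‖ := norm_pos_iff.2 hωne
  intro p
  induction p with
  | zero =>
    intro g D hper hdiff hbd
    simp only [pow_zero, div_one, mul_one]
    calc ‖∑ k ∈ range N, (g ((k : ℝ) * (2 * bb / N)) : ℂ) * ω ^ k‖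
        ≤ ∑ k ∈ range N, ‖(g ((k : ℝ) * (2 * bb / N)) : ℂ) * ω ^ k‖ := norm_sum_le _ _
      _ ≤ ∑ k ∈ range N, D := by
          apply Finset.sum_le_sum
          intro k _
          rw [norm_mul]
          have h1 : ‖ω ^ k‖ = 1 := by
            have h2 : ‖ω‖ = 1 := by
              have h3 : ‖ω‖ ^ N = 1 := by rw [← norm_pow, hω, norm_one]
              rcases lt_trichotomy ‖ω‖ 1 with h | h | h
              · exfalso; nlinarith [pow_lt_one₀ (norm_nonneg ω) h hN.ne']
              · exact h
              · exfalso; nlinarith [one_lt_pow₀ h hN.ne']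
            rw [norm_pow, h2, one_pow]
          rw [h1, mul_one, Complex.norm_real]
          simpa using hbd _
      _ = N * D := by rw [Finset.sum_const, card_range, nsmul_eq_mul]
  | succ p ih =>
    intro g D hper hdiff hbd
    set h : ℝ := 2 * bb / N with hh_def
    set Δg : ℝ → ℝ := fun t => g t - g (t - h) with hΔ
    have hDnn : 0 ≤ D := le_trans (abs_nonneg _) (hbd 0)
    -- key identity
    have key : (1 - ω) * (∑ k ∈ range N, (g ((k : ℝ) * h) : ℂ) * ω ^ k) =
        ∑ k ∈ range N, (Δg ((k : ℝ) * h) : ℂ) * ω ^ k := by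
      have hshift : ∑ k ∈ range N, (g ((k : ℝ) * h) : ℂ) * ω ^ (k + 1) =
          ∑ k ∈ range N, (g ((k : ℝ) * h - h) : ℂ) * ω ^ k := by
        set F : ℕ → ℂ := fun m => (g ((m : ℝ) * h - h) : ℂ) * ω ^ m with hF
        have e1 : ∀ k : ℕ, (g ((k : ℝ) * h) : ℂ) * ω ^ (k + 1) = F (k + 1) := by
          intro k
          simp only [hF]
          congr 2
          push_cast
          ring
        have eFN : F N = F 0 := by
          have harg : (N : ℝ) * h - h = -h + 2 * bb := by
            have : (N : ℝ) * h = 2 * bb := by rw [hh_def]; field_simp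
            rw [this]; ring
          simp only [hF, hω, Nat.cast_zero, zero_mul, zero_sub, pow_zero, mul_one]
          congr 1
          exact_mod_cast (harg ▸ hper (-h) : g ((N : ℝ) * h - h) = g (-h))
        calc ∑ k ∈ range N, (g ((k : ℝ) * h) : ℂ) * ω ^ (k + 1)
            = ∑ k ∈ range N, F (k + 1) := by
              exact Finset.sum_congr rfl fun k _ => e1 k
          _ = ∑ k ∈ range (N + 1), F k - F 0 := by rw [Finset.sum_range_succ']; ring
          _ = ∑ k ∈ range N, F k := by rw [Finset.sum_range_succ, eFN]; ring
      calc (1 - ω) * (∑ k ∈ range N, (g ((k : ℝ) * h) : ℂ) * ω ^ k)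
          = ∑ k ∈ range N, (g ((k : ℝ) * h) : ℂ) * ω ^ k
            - ∑ k ∈ range N, (g ((k : ℝ) * h) : ℂ) * ω ^ (k + 1) := by
            rw [Finset.mul_sum, ← Finset.sum_sub_distrib]
            exact Finset.sum_congr rfl fun k _ => by ring
        _ = ∑ k ∈ range N, (Δg ((k : ℝ) * h) : ℂ) * ω ^ k := by
            rw [hshift, ← Finset.sum_sub_distrib]
            refine Finset.sum_congr rfl fun k _ => ?_
            simp only [hΔ]
            push_cast
            ring
    -- hypotheses for Δg
    have hΔper : ∀ t, Δg (t + 2 * bb) = Δg t := by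
      intro t
      simp only [hΔ]
      rw [hper, show t + 2 * bb - h = (t - h) + 2 * bb by ring, hper]
    have hsubeq : ∀ n ≤ p, iteratedDeriv n Δg =
        fun t => iteratedDeriv n g t - iteratedDeriv n g (t - h) := by
      intro n hn
      exact iterSub g h n (fun i hi => hdiff i (by omega))
    have hΔdiff : ∀ i < p, Differentiable ℝ (iteratedDeriv i Δg) := by
      intro i hi
      rw [hsubeq i (by omega)]
      exact (hdiff i (by omega)).sub (((hdiff i (by omega)).comp (differentiable_id.sub_const h)))
    have hΔbd : ∀ t, |iteratedDeriv p Δg t| ≤ D * h := by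
      intro t
      rw [hsubeq p le_rfl]
      have := mvt_bound_s18 (iteratedDeriv p g) (hdiff p (by omega)) D
        (fun s => by rw [← iteratedDeriv_succ]; exact hbd s) (t - h) t
      simpa [abs_of_pos hh] using this
    have hIH := ih Δg (D * h) hΔper hΔdiff hΔbd
    have hnorm : ‖(1 - ω)‖ * ‖∑ k ∈ range N, (g ((k : ℝ) * h) : ℂ) * ω ^ k‖ ≤
        N * (D * h) * h ^ p / ‖1 - ω‖ ^ p := by
      rw [← norm_mul, key]; exact hIH
    rw [le_div_iff₀ (by positivity)]
    calc ‖∑ k ∈ range N, (g ((k : ℝ) * h) : ℂ) * ω ^ k‖ * ‖1 - ω‖ ^ (p + 1)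
        = (‖1 - ω‖ * ‖∑ k ∈ range N, (g ((k : ℝ) * h) : ℂ) * ω ^ k‖) * ‖1 - ω‖ ^ p := by ring
      _ ≤ (N * (D * h) * h ^ p / ‖1 - ω‖ ^ p) * ‖1 - ω‖ ^ p := by
          apply mul_le_mul_of_nonneg_right hnorm (by positivity)
      _ = (N : ℝ) * (D * h) * h ^ p := div_mul_cancel₀ _ (by positivity)
      _ = N * D * h ^ (p + 1) := by ring
      

lemma Ecos_bound (b D : ℝ) (hb : 0 < b) (K : ℕ)
    (f : ℝ → ℝ)
    (hper : ∀ t, f (t + 2 * b) = f t)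
    (hdiff : ∀ i, i ≤ K → Differentiable ℝ (iteratedDeriv i f))
    (hbd : ∀ t, |iteratedDeriv (K + 1) f t| ≤ D)
    (N : ℕ) (hN : 0 < N) (j : ℕ)
    (hcos : Real.cos (2 * Real.pi * j / N) ≤ 0) :
    |∑ k ∈ range N, f (-b + (k : ℝ) * (2 * b / N)) *
        Real.cos (2 * Real.pi * (j : ℝ) * (k : ℝ) / (N : ℝ))| ≤
      N * D * (2 * b / N) ^ (K + 1) := by
  have hNR : (0 : ℝ) < N := by exact_mod_cast hN
  have hDnn : 0 ≤ D := le_trans (abs_nonneg _) (hbd 0)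
  set θ : ℝ := 2 * Real.pi * j / N with hθ
  set ω : ℂ := Complex.exp (θ * Complex.I) with hω
  have hre : ω.re = Real.cos θ := Complex.exp_ofReal_mul_I_re θ
  have hωN : ω ^ N = 1 := by
    rw [hω, ← Complex.exp_nat_mul]
    have hNθ : (N : ℝ) * θ = (j : ℝ) * (2 * Real.pi) := by
      rw [hθ]; field_simp
    have h2 : (N : ℂ) * ((θ : ℝ) * Complex.I) = (j : ℤ) * (2 * (Real.pi : ℂ) * Complex.I) := by
      calc (N : ℂ) * ((θ : ℝ) * Complex.I) = (((N : ℝ) * θ : ℝ) : ℂ) * Complex.I := by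
            push_cast; ring
        _ = (((j : ℝ) * (2 * Real.pi) : ℝ) : ℂ) * Complex.I := by rw [hNθ]
        _ = (j : ℤ) * (2 * (Real.pi : ℂ) * Complex.I) := by push_cast; ring
    rw [h2, Complex.exp_int_mul_two_pi_mul_I]
  have hω1 : ω ≠ 1 := by
    intro h
    have : ω.re = 1 := by rw [h]; simp
    rw [hre] at this
    rw [this] at hcos
    linarith
  -- the shifted function
  set g : ℝ → ℝ := fun t => f (t - b) with hg
  have hgper : ∀ t, g (t + 2 * b) = g t := by
    intro t
    simp only [hg]
    rw [show t + 2 * b - b = (t - b) + 2 * b by ring, hper]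
  have hgiter : ∀ n, iteratedDeriv n g = fun t => iteratedDeriv n f (t - b) :=
    fun n => iterShift f b n
  have hgdiff : ∀ i < K + 1, Differentiable ℝ (iteratedDeriv i g) := by
    intro i hi
    rw [hgiter i]
    exact (hdiff i (by omega)).comp (differentiable_id.sub_const b)
  have hgbd : ∀ t, |iteratedDeriv (K + 1) g t| ≤ D := by
    intro t
    rw [hgiter (K + 1)]
    exact hbd (t - b)
  have hsum := expsum b hb N hN ω hωN hω1 (K + 1) g D hgper hgdiff hgbd
  -- real sum equals real part
  have hreal : ∑ k ∈ range N, f (-b + (k : ℝ) * (2 * b / N)) *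
      Real.cos (2 * Real.pi * (j : ℝ) * (k : ℝ) / (N : ℝ)) =
      (∑ k ∈ range N, (g ((k : ℝ) * (2 * b / N)) : ℂ) * ω ^ k).re := by
    rw [Complex.re_sum]
    refine Finset.sum_congr rfl fun k _ => ?_
    have hωk : ω ^ k = Complex.exp ((((k : ℝ) * θ : ℝ) : ℂ) * Complex.I) := by
      rw [hω, ← Complex.exp_nat_mul]
      push_cast
      ring_nf
    rw [hωk, Complex.re_ofReal_mul, Complex.exp_ofReal_mul_I_re]
    refine congrArg₂ (· * ·) ?_ ?_
    · show f (-b + (k : ℝ) * (2 * b / N)) = f ((k : ℝ) * (2 * b / N) - b)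
      congr 1
      ring
    · congr 1
      rw [hθ]
      ring
  rw [hreal]
  have h3 : |(∑ k ∈ range N, (g ((k : ℝ) * (2 * b / N)) : ℂ) * ω ^ k).re| ≤
      ‖∑ k ∈ range N, (g ((k : ℝ) * (2 * b / N)) : ℂ) * ω ^ k‖ :=
    Complex.abs_re_le_norm _
  have hω_lb : (1 : ℝ) ≤ ‖1 - ω‖ := by
    have h4 : |(1 - ω).re| ≤ ‖1 - ω‖ := Complex.abs_re_le_norm _
    have h5 : (1 - ω).re = 1 - Real.cos θ := by
      rw [Complex.sub_re, hre]; norm_num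
    rw [h5] at h4
    calc (1 : ℝ) ≤ 1 - Real.cos θ := by linarith
      _ ≤ |1 - Real.cos θ| := le_abs_self _
      _ ≤ ‖1 - ω‖ := h4
  calc |(∑ k ∈ range N, (g ((k : ℝ) * (2 * b / N)) : ℂ) * ω ^ k).re|
      ≤ ‖∑ k ∈ range N, (g ((k : ℝ) * (2 * b / N)) : ℂ) * ω ^ k‖ := h3
    _ ≤ N * D * (2 * b / N) ^ (K + 1) / ‖1 - ω‖ ^ (K + 1) := hsum
    _ ≤ N * D * (2 * b / N) ^ (K + 1) := by
        apply div_le_self (by positivity)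
        exact one_le_pow₀ hω_lb

lemma iter_cos_sum (M : ℕ) (c μ : ℕ → ℝ) (k : ℕ) :
    iteratedDeriv k (fun x => ∑ j ∈ range M, c j * Real.cos (μ j * x)) =
      fun x => ∑ j ∈ range M, c j * ((μ j) ^ k * Real.cos (μ j * x + k * (Real.pi / 2))) := by
  induction k with
  | zero => simp
  | succ k ih =>
    rw [iteratedDeriv_succ, ih]
    funext x
    have hterm : ∀ j : ℕ, HasDerivAt
        (fun x => c j * ((μ j) ^ k * Real.cos (μ j * x + k * (Real.pi / 2))))
        (c j * ((μ j) ^ (k + 1) * Real.cos (μ j * x + (k + 1 : ℕ) * (Real.pi / 2)))) x := by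
      intro j
      have h1 : HasDerivAt (fun x => μ j * x + (k : ℝ) * (Real.pi / 2)) (μ j * 1) x :=
        ((hasDerivAt_id x).const_mul (μ j)).add_const _
      have h2 := (h1.cos).const_mul (c j * (μ j) ^ k)
      have h3 : c j * (μ j) ^ k * (-Real.sin (μ j * x + k * (Real.pi / 2)) * (μ j * 1)) =
          c j * ((μ j) ^ (k + 1) * Real.cos (μ j * x + (k + 1 : ℕ) * (Real.pi / 2))) := by
        have e1 : ((k + 1 : ℕ) : ℝ) * (Real.pi / 2) = (k : ℝ) * (Real.pi / 2) + Real.pi / 2 := by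
          push_cast; ring
        rw [e1, show μ j * x + ((k : ℝ) * (Real.pi / 2) + Real.pi / 2) =
          (μ j * x + (k : ℝ) * (Real.pi / 2)) + Real.pi / 2 by ring, Real.cos_add_pi_div_two]
        ring
      have h4 : (fun x => c j * (μ j) ^ k * Real.cos (μ j * x + (k : ℝ) * (Real.pi / 2))) =
          (fun x => c j * ((μ j) ^ k * Real.cos (μ j * x + (k : ℝ) * (Real.pi / 2)))) := by
        funext y; ring
      rw [← h3]
      rw [← h4]
      exact h2
    rw [deriv_fun_sum (fun j _ => (hterm j).differentiableAt)]
    exact Finset.sum_congr rfl fun j _ => (hterm j).deriv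


open Finset in
/-- Coefficients of the adjusted trigonometric interpolant of an even
`2b`-periodic function `f` built on `N = 2M` equispaced nodes. -/
noncomputable def adjCoef (b : ℝ) (f : ℝ → ℝ) (M j : ℕ) : ℝ :=
  if j = 0 then
    (1 / (M : ℝ)) * ∑ k ∈ Finset.range M, f (-b + (2 * (k : ℝ)) * (2 * b / (2 * (M : ℝ))))
  else
    (2 / (2 * (M : ℝ))) * ∑ k ∈ Finset.range (2 * M),
      (-1 : ℝ) ^ j * f (-b + (k : ℝ) * (2 * b / (2 * (M : ℝ)))) *
        Real.cos (2 * Real.pi * (j : ℝ) * (k : ℝ) / (2 * (M : ℝ)))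

/-- The adjusted trigonometric interpolant of `f` built on `N = 2M` equispaced nodes. -/
noncomputable def adjInterp (b : ℝ) (f : ℝ → ℝ) (M : ℕ) (x : ℝ) : ℝ :=
  ∑ j ∈ Finset.range M, adjCoef b f M j * Real.cos ((j : ℝ) * Real.pi * x / b)

lemma sum_shape (f : ℝ → ℝ) (n : ℕ) (a a' c c' : ℕ → ℝ)
    (ha : ∀ k, a k = a' k) (hc : ∀ k, c k = c' k) :
    ∑ k ∈ range n, f (a k) * Real.cos (c k) = ∑ k ∈ range n, f (a' k) * Real.cos (c' k) :=
  Finset.sum_congr rfl fun k _ => by rw [ha k, hc k]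

lemma alias_general (A : ℕ → ℝ) (n : ℕ) :
    ∑ k ∈ range n, A (2 * k) =
      (∑ m ∈ range (2 * n), A m + ∑ m ∈ range (2 * n), (-1 : ℝ) ^ m * A m) / 2 := by
  rw [sum_pairs A n, sum_pairs (fun m => (-1 : ℝ) ^ m * A m) n, ← Finset.sum_add_distrib,
    Finset.sum_div]
  refine (Finset.sum_congr rfl fun k _ => ?_)
  have h1 : (-1 : ℝ) ^ (2 * k) = 1 := by rw [pow_mul]; norm_num
  have h2 : (-1 : ℝ) ^ (2 * k + 1) = -1 := by rw [pow_succ, h1]; norm_num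
  rw [h1, h2]
  ring

section Coef

variable (b D : ℝ) (hb : 0 < b) (K : ℕ) (f : ℝ → ℝ)
    (hper : ∀ t, f (t + 2 * b) = f t)
    (hdiff : ∀ i, i ≤ K → Differentiable ℝ (iteratedDeriv i f))
    (hbd : ∀ t, |iteratedDeriv (K + 1) f t| ≤ D)

include hb hper hdiff hbd

-- |S(4M, i)| ≤ 4M * D * (b/(2M))^(K+1), for cos(2πi/(4M)) ≤ 0, phrased with casts of (2*(2*M)).
lemma S4M_bound (M i : ℕ) (hM : 1 ≤ M)
    (hcos : Real.cos (2 * Real.pi * i / ((2 * (2 * M) : ℕ) : ℝ)) ≤ 0) :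
    |∑ k ∈ range (2 * (2 * M)), f (-b + (k : ℝ) * (2 * b / (2 * ((2 * M : ℕ) : ℝ)))) *
        Real.cos (2 * Real.pi * (i : ℝ) * (k : ℝ) / (2 * ((2 * M : ℕ) : ℝ)))| ≤
      4 * M * D * (b / (2 * M)) ^ (K + 1) := by
  have h0 : (0 : ℝ) < M := by exact_mod_cast hM
  have hcast : ((2 * (2 * M) : ℕ) : ℝ) = 2 * ((2 * M : ℕ) : ℝ) := by push_cast; ring
  have := Ecos_bound b D hb K f hper hdiff hbd (2 * (2 * M)) (by omega) i hcos
  rw [hcast] at this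
  calc |∑ k ∈ range (2 * (2 * M)), f (-b + (k : ℝ) * (2 * b / (2 * ((2 * M : ℕ) : ℝ)))) *
        Real.cos (2 * Real.pi * (i : ℝ) * (k : ℝ) / (2 * ((2 * M : ℕ) : ℝ)))|
      ≤ ((2 * (2 * M) : ℕ) : ℝ) * D * (2 * b / (2 * ((2 * M : ℕ) : ℝ))) ^ (K + 1) := by
        refine this.trans (le_of_eq ?_)
        push_cast
        ring
    _ = 4 * M * D * (b / (2 * M)) ^ (K + 1) := by
        push_cast
        have : 2 * b / (2 * (2 * (M : ℝ))) = b / (2 * M) := by field_simp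
        rw [this]
        ring

lemma coef_tail (M j : ℕ) (hM : 1 ≤ M) (hj1 : M ≤ j) (hj2 : j < 2 * M) :
    |adjCoef b f (2 * M) j| ≤ 2 * D * (b / 2) ^ (K + 1) / (M : ℝ) ^ (K + 1) := by
  have h0 : (0 : ℝ) < M := by exact_mod_cast hM
  have hj0 : j ≠ 0 := by omega
  have hpi := Real.pi_pos
  have hDnn : 0 ≤ D := le_trans (abs_nonneg _) (hbd 0)
  have hjR1 : (M : ℝ) ≤ j := by exact_mod_cast hj1
  have hjR2 : (j : ℝ) < 2 * M := by exact_mod_cast hj2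
  have hcos : Real.cos (2 * Real.pi * j / ((2 * (2 * M) : ℕ) : ℝ)) ≤ 0 := by
    apply Real.cos_nonpos_of_pi_div_two_le_of_le
    · rw [le_div_iff₀ (by push_cast; positivity)]
      push_cast
      nlinarith
    · rw [div_le_iff₀ (by push_cast; positivity)]
      push_cast
      nlinarith
  have hS := S4M_bound b D hb K f hper hdiff hbd M j hM hcos
  simp only [adjCoef, if_neg hj0]
  have hpull : ∑ k ∈ range (2 * (2 * M)),
      (-1 : ℝ) ^ j * f (-b + (k : ℝ) * (2 * b / (2 * ((2 * M : ℕ) : ℝ)))) *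
        Real.cos (2 * Real.pi * (j : ℝ) * (k : ℝ) / (2 * ((2 * M : ℕ) : ℝ))) =
      (-1 : ℝ) ^ j * ∑ k ∈ range (2 * (2 * M)),
        f (-b + (k : ℝ) * (2 * b / (2 * ((2 * M : ℕ) : ℝ)))) *
          Real.cos (2 * Real.pi * (j : ℝ) * (k : ℝ) / (2 * ((2 * M : ℕ) : ℝ))) := by
    rw [Finset.mul_sum]
    exact Finset.sum_congr rfl fun k _ => by ring
  rw [hpull, abs_mul, abs_mul, abs_pow, abs_neg, abs_one, one_pow, one_mul]
  have habs : |2 / (2 * ((2 * M : ℕ) : ℝ))| = 1 / (2 * (M : ℝ)) := by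
    rw [abs_of_pos (by push_cast; positivity)]
    push_cast
    field_simp
  rw [habs]
  calc 1 / (2 * (M : ℝ)) * |∑ k ∈ range (2 * (2 * M)),
        f (-b + (k : ℝ) * (2 * b / (2 * ((2 * M : ℕ) : ℝ)))) *
          Real.cos (2 * Real.pi * (j : ℝ) * (k : ℝ) / (2 * ((2 * M : ℕ) : ℝ)))|
      ≤ 1 / (2 * (M : ℝ)) * (4 * M * D * (b / (2 * M)) ^ (K + 1)) := by
        apply mul_le_mul_of_nonneg_left hS (by positivity)
    _ = 2 * D * (b / 2) ^ (K + 1) / (M : ℝ) ^ (K + 1) := by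
        rw [show b / (2 * (M : ℝ)) = (b / 2) / M by ring, div_pow]
        field_simp
        ring

lemma coef_diff (M j : ℕ) (hM : 1 ≤ M) (hj1 : 1 ≤ j) (hj2 : j < M) :
    |adjCoef b f M j - adjCoef b f (2 * M) j| ≤
      2 * D * (b / 2) ^ (K + 1) / (M : ℝ) ^ (K + 1) := by
  have h0 : (0 : ℝ) < M := by exact_mod_cast hM
  have hj0 : j ≠ 0 := by omega
  have hpi := Real.pi_pos
  have hDnn : 0 ≤ D := le_trans (abs_nonneg _) (hbd 0)
  have hjR2 : (j : ℝ) < M := by exact_mod_cast hj2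
  have hjR0 : (0 : ℝ) ≤ j := by positivity
  set A : ℕ → ℝ := fun m => f (-b + (m : ℝ) * (2 * b / (2 * ((2 * M : ℕ) : ℝ)))) *
    Real.cos (2 * Real.pi * (j : ℝ) * (m : ℝ) / (2 * ((2 * M : ℕ) : ℝ))) with hA
  set S4 : ℝ := ∑ k ∈ range (2 * (2 * M)),
    f (-b + (k : ℝ) * (2 * b / (2 * ((2 * M : ℕ) : ℝ)))) *
      Real.cos (2 * Real.pi * (j : ℝ) * (k : ℝ) / (2 * ((2 * M : ℕ) : ℝ))) with hS4
  set S4' : ℝ := ∑ k ∈ range (2 * (2 * M)),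
    f (-b + (k : ℝ) * (2 * b / (2 * ((2 * M : ℕ) : ℝ)))) *
      Real.cos (2 * Real.pi * ((j + 2 * M : ℕ) : ℝ) * (k : ℝ) / (2 * ((2 * M : ℕ) : ℝ))) with hS4'
  set S2 : ℝ := ∑ k ∈ range (2 * M),
    f (-b + (k : ℝ) * (2 * b / (2 * (M : ℝ)))) *
      Real.cos (2 * Real.pi * (j : ℝ) * (k : ℝ) / (2 * (M : ℝ))) with hS2
  have hMne : (2 : ℝ) * ((2 * M : ℕ) : ℝ) ≠ 0 := by push_cast; positivity
  -- step 1 : S2 = ∑ A (2k)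
  have step1 : S2 = ∑ k ∈ range (2 * M), A (2 * k) := by
    rw [hS2]
    refine Finset.sum_congr rfl fun k _ =>
      congrArg₂ (fun u v => f u * Real.cos v) ?_ ?_
    · push_cast
      field_simp
    · push_cast
      field_simp
  -- step 2 : aliasing
  have step2 : S2 = (S4 + S4') / 2 := by
    rw [step1, alias_general A (2 * M)]
    congr 1
    congr 1
    rw [hS4']
    refine Finset.sum_congr rfl fun m _ => ?_
    have harg : 2 * Real.pi * ((j + 2 * M : ℕ) : ℝ) * (m : ℝ) / (2 * ((2 * M : ℕ) : ℝ)) =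
        2 * Real.pi * (j : ℝ) * (m : ℝ) / (2 * ((2 * M : ℕ) : ℝ)) + (m : ℕ) * Real.pi := by
      push_cast
      field_simp
    rw [hA]
    simp only []
    rw [harg, Real.cos_add_nat_mul_pi]
    ring
  -- coefficient formulas
  have e1 : adjCoef b f M j = (-1 : ℝ) ^ j * ((1 / (M : ℝ)) * S2) := by
    simp only [adjCoef, if_neg hj0]
    rw [hS2, Finset.mul_sum, Finset.mul_sum, Finset.mul_sum]
    refine Finset.sum_congr rfl fun k _ => ?_
    field_simp
  have e2 : adjCoef b f (2 * M) j = (-1 : ℝ) ^ j * ((1 / (2 * (M : ℝ))) * S4) := by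
    simp only [adjCoef, if_neg hj0]
    rw [hS4, Finset.mul_sum, Finset.mul_sum, Finset.mul_sum]
    refine Finset.sum_congr rfl fun k _ => ?_
    push_cast
    field_simp
  have e3 : adjCoef b f M j - adjCoef b f (2 * M) j = (-1 : ℝ) ^ j * ((1 / (2 * (M : ℝ))) * S4') := by
    rw [e1, e2, step2]
    field_simp
    ring
  rw [e3, abs_mul, abs_mul, abs_pow, abs_neg, abs_one, one_pow, one_mul]
  have hcos : Real.cos (2 * Real.pi * ((j + 2 * M : ℕ) : ℝ) / ((2 * (2 * M) : ℕ) : ℝ)) ≤ 0 := by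
    apply Real.cos_nonpos_of_pi_div_two_le_of_le
    · rw [le_div_iff₀ (by push_cast; positivity)]
      push_cast
      nlinarith
    · rw [div_le_iff₀ (by push_cast; positivity)]
      push_cast
      nlinarith
  have hS := S4M_bound b D hb K f hper hdiff hbd M (j + 2 * M) hM hcos
  rw [← hS4'] at hS
  have habs : |1 / (2 * (M : ℝ))| = 1 / (2 * (M : ℝ)) := abs_of_pos (by positivity)
  rw [habs]
  calc 1 / (2 * (M : ℝ)) * |S4'| ≤ 1 / (2 * (M : ℝ)) * (4 * M * D * (b / (2 * M)) ^ (K + 1)) := by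
        apply mul_le_mul_of_nonneg_left hS (by positivity)
    _ = 2 * D * (b / 2) ^ (K + 1) / (M : ℝ) ^ (K + 1) := by
        rw [show b / (2 * (M : ℝ)) = (b / 2) / M by ring, div_pow]
        field_simp
        ring

end Coef


/-- for `1 ≤ k < K`, the `k`-th derivatives of the adjusted trigonometric
interpolants on `N = 2M` and on `4M` equispaced nodes satisfy
`sup_x |f_M^{(k)}(x) - f_{2M}^{(k)}(x)| ≤ C / N^(K-k)` for an even `2b`-periodic
function with bounded `(K+1)`-th derivative. -/
theorem adjusted_interpolant_doubling_derivative_bound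
    (b D : ℝ) (hb : 0 < b) (K : ℕ) (hK : 2 ≤ K)
    (f : ℝ → ℝ)
    (hper : ∀ t, f (t + 2 * b) = f t)
    (heven : ∀ t, f (-t) = f t)
    (hdiff : ∀ i, i ≤ K → Differentiable ℝ (iteratedDeriv i f))
    (hbd : ∀ t, |iteratedDeriv (K + 1) f t| ≤ D) :
    ∀ k, 1 ≤ k → k < K →
      ∃ C > (0 : ℝ), ∀ M : ℕ, 1 ≤ M → ∀ x : ℝ,
        |iteratedDeriv k (adjInterp b f M) x - iteratedDeriv k (adjInterp b f (2 * M)) x| ≤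
          C / (2 * (M : ℝ)) ^ (K - k) := by

  intro k hk1 hkK
  have hDnn : (0 : ℝ) ≤ |D| := abs_nonneg D
  have hpi := Real.pi_pos
  set DD : ℝ := |D| + 1 with hDD
  have hbd' : ∀ t, |iteratedDeriv (K + 1) f t| ≤ DD := fun t =>
    (hbd t).trans (by rw [hDD]; linarith [le_abs_self D])
  set B : ℝ := 2 * DD * (b / 2) ^ (K + 1) with hB
  have hBpos : 0 < B := by rw [hB, hDD]; positivity
  refine ⟨2 * B * (2 * Real.pi / b) ^ k * 2 ^ (K - k), by positivity, ?_⟩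
  intro M hM x
  have h0 : (0 : ℝ) < M := by exact_mod_cast hM
  -- derivative formula
  have hI : ∀ m : ℕ, iteratedDeriv k (adjInterp b f m) =
      fun x => ∑ j ∈ range m, adjCoef b f m j *
        (((j : ℝ) * Real.pi / b) ^ k *
          Real.cos (((j : ℝ) * Real.pi / b) * x + k * (Real.pi / 2))) := by
    intro m
    have h1 : adjInterp b f m = fun x => ∑ j ∈ range m, adjCoef b f m j *
        Real.cos (((j : ℝ) * Real.pi / b) * x) := by
      funext y
      simp only [adjInterp]
      refine Finset.sum_congr rfl fun j _ => ?_
      congr 1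
      ring
    rw [h1, iter_cos_sum]
  rw [hI M, hI (2 * M)]
  set φ : ℕ → ℝ := fun j => ((j : ℝ) * Real.pi / b) ^ k *
    Real.cos (((j : ℝ) * Real.pi / b) * x + k * (Real.pi / 2)) with hφ
  have hsplit : ∑ j ∈ range (2 * M), adjCoef b f (2 * M) j * φ j =
      ∑ j ∈ range M, adjCoef b f (2 * M) j * φ j +
        ∑ j ∈ range M, adjCoef b f (2 * M) (M + j) * φ (M + j) := by
    have h2M : range (2 * M) = range (M + M) := by rw [two_mul]
    rw [h2M]
    exact sum_range_add' _ M M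
  simp only []
  rw [hsplit]
  have hdiffeq : ∑ j ∈ range M, adjCoef b f M j * φ j -
      (∑ j ∈ range M, adjCoef b f (2 * M) j * φ j +
        ∑ j ∈ range M, adjCoef b f (2 * M) (M + j) * φ (M + j)) =
      (∑ j ∈ range M, (adjCoef b f M j - adjCoef b f (2 * M) j) * φ j) -
        ∑ j ∈ range M, adjCoef b f (2 * M) (M + j) * φ (M + j) := by
    have e : ∑ j ∈ range M, (adjCoef b f M j - adjCoef b f (2 * M) j) * φ j =
        ∑ j ∈ range M, adjCoef b f M j * φ j -
          ∑ j ∈ range M, adjCoef b f (2 * M) j * φ j := by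
      rw [← Finset.sum_sub_distrib]
      exact Finset.sum_congr rfl fun j _ => by ring
    rw [e]
    ring
  rw [hdiffeq]
  -- term bounds
  have hφ_bd : ∀ j : ℕ, (j : ℝ) ≤ 2 * M → |φ j| ≤ ((2 * (M : ℝ)) * Real.pi / b) ^ k := by
    intro j hj
    rw [hφ]
    simp only []
    rw [abs_mul]
    calc |((j : ℝ) * Real.pi / b) ^ k| * |Real.cos (((j : ℝ) * Real.pi / b) * x + k * (Real.pi / 2))|
        ≤ ((j : ℝ) * Real.pi / b) ^ k * 1 := by
          apply mul_le_mul
          · rw [abs_pow, abs_of_nonneg (by positivity)]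
          · exact Real.abs_cos_le_one _
          · exact abs_nonneg _
          · positivity
      _ ≤ ((2 * (M : ℝ)) * Real.pi / b) ^ k := by
          rw [mul_one]
          gcongr
  have hT1 : ∀ j ∈ range M, |(adjCoef b f M j - adjCoef b f (2 * M) j) * φ j| ≤
      B / (M : ℝ) ^ (K + 1) * ((2 * (M : ℝ)) * Real.pi / b) ^ k := by
    intro j hj
    rw [abs_mul]
    rcases Nat.eq_zero_or_pos j with h | h
    · subst h
      have hφ0 : φ 0 = 0 := by
        rw [hφ]
        simp only [Nat.cast_zero, zero_mul, zero_div]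
        rw [zero_pow (by omega : k ≠ 0), zero_mul]
      rw [hφ0, abs_zero, mul_zero]
      positivity
    · have h1 := coef_diff b DD hb K f hper hdiff hbd' M j hM h (mem_range.1 hj)
      have h2 : (j : ℝ) ≤ 2 * M := by
        have := (mem_range.1 hj)
        have : (j : ℝ) < M := by exact_mod_cast this
        linarith
      exact mul_le_mul h1 (hφ_bd j h2) (abs_nonneg _) (by positivity)
  have hT2 : ∀ j ∈ range M, |adjCoef b f (2 * M) (M + j) * φ (M + j)| ≤
      B / (M : ℝ) ^ (K + 1) * ((2 * (M : ℝ)) * Real.pi / b) ^ k := by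
    intro j hj
    rw [abs_mul]
    have h1 := coef_tail b DD hb K f hper hdiff hbd' M (M + j) hM (by omega)
      (by have := mem_range.1 hj; omega)
    have h2 : ((M + j : ℕ) : ℝ) ≤ 2 * M := by
      have := mem_range.1 hj
      push_cast
      have : (j : ℝ) < M := by exact_mod_cast this
      linarith
    exact mul_le_mul h1 (hφ_bd (M + j) h2) (abs_nonneg _) (by positivity)
  calc |(∑ j ∈ range M, (adjCoef b f M j - adjCoef b f (2 * M) j) * φ j) -
        ∑ j ∈ range M, adjCoef b f (2 * M) (M + j) * φ (M + j)|
      ≤ |∑ j ∈ range M, (adjCoef b f M j - adjCoef b f (2 * M) j) * φ j| +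
        |∑ j ∈ range M, adjCoef b f (2 * M) (M + j) * φ (M + j)| := abs_sub _ _
    _ ≤ (∑ j ∈ range M, |(adjCoef b f M j - adjCoef b f (2 * M) j) * φ j|) +
        ∑ j ∈ range M, |adjCoef b f (2 * M) (M + j) * φ (M + j)| :=
        add_le_add (Finset.abs_sum_le_sum_abs _ _) (Finset.abs_sum_le_sum_abs _ _)
    _ ≤ (∑ _j ∈ range M, B / (M : ℝ) ^ (K + 1) * ((2 * (M : ℝ)) * Real.pi / b) ^ k) +
        ∑ _j ∈ range M, B / (M : ℝ) ^ (K + 1) * ((2 * (M : ℝ)) * Real.pi / b) ^ k :=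
        add_le_add (Finset.sum_le_sum hT1) (Finset.sum_le_sum hT2)
    _ = 2 * M * (B / (M : ℝ) ^ (K + 1) * ((2 * (M : ℝ)) * Real.pi / b) ^ k) := by
        rw [Finset.sum_const, card_range, nsmul_eq_mul]
        ring
    _ = 2 * B * (2 * Real.pi / b) ^ k * 2 ^ (K - k) / (2 * (M : ℝ)) ^ (K - k) := by
        have hKk : K + 1 = (k + 1) + (K - k) := by omega
        rw [hKk, pow_add,
          show (2 * (M : ℝ)) * Real.pi / b = (2 * Real.pi / b) * M by ring,
          mul_pow, mul_pow]
        field_simp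
        ring
end
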